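/- arXiv:math/0604210 — 9 statements merged into one kernel-verified Lean document; each statement's English description precedes it below -/
import Mathlib

section
/- (Lewin) Let c be a positive integer and A a subset of ZMod c. Then the discrete Fourier transform of the interval content of A equals the squared modulus of the Fourier transform of A: for all t ∈ ZMod c, ∑_{k ∈ ZMod c} (IC_A(k) : ℂ) · exp(-2πi·(k.val)·(t.val)/c) = |F_A(t)|². -/
/-- The discrete Fourier transform of a finite subset `A` of `ZMod c`:
`F_A(t) = ∑_{k ∈ A} exp(-2πi·(k.val)·(t.val)/c)`. -/
noncomputable def fourierTransform (c : ℕ) (A : Finset (ZMod c)) (t : ZMod c) : ℂ :=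
  ∑ k ∈ A, Complex.exp (-2 * Real.pi * Complex.I * ((k.val : ℂ) * (t.val : ℂ)) / c)

/-- The interval content of `A ⊆ ZMod c`: `IC_A(k)` counts the pairs
`(x, y) ∈ A × A` with `x + k = y`. -/
def intervalContent (c : ℕ) (A : Finset (ZMod c)) (k : ZMod c) : ℕ :=
  ((A ×ˢ A).filter (fun p => p.1 + k = p.2)).card

namespace LewinAux

noncomputable def f (c : ℕ) (t : ZMod c) (n : ℕ) : ℂ :=
  Complex.exp (-2 * Real.pi * Complex.I * ((n : ℂ) * (t.val : ℂ)) / c)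

noncomputable def χ (c : ℕ) (t : ZMod c) (k : ZMod c) : ℂ := f c t k.val

lemma f_add (c : ℕ) (t : ZMod c) (a b : ℕ) : f c t (a + b) = f c t a * f c t b := by
  rw [f, f, f, ← Complex.exp_add]
  congr 1
  push_cast
  ring

lemma f_mul_c (c : ℕ) [NeZero c] (t : ZMod c) (m : ℕ) : f c t (c * m) = 1 := by
  have hc : (c : ℂ) ≠ 0 := Nat.cast_ne_zero.mpr (NeZero.ne c)
  rw [f]
  have : -2 * (Real.pi : ℂ) * Complex.I * (((c * m : ℕ) : ℂ) * (t.val : ℂ)) / c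
      = ((-(m * t.val : ℕ) : ℤ) : ℂ) * (2 * Real.pi * Complex.I) := by
    push_cast
    field_simp
  rw [this, Complex.exp_int_mul_two_pi_mul_I]

lemma chi_hom (c : ℕ) [NeZero c] (t : ZMod c) (x k : ZMod c) :
    χ c t (x + k) = χ c t x * χ c t k := by
  have hval : x.val + k.val = (x + k).val + c * ((x.val + k.val) / c) := by
    rw [ZMod.val_add]
    exact (Nat.mod_add_div _ _).symm
  have := f_add c t x.val k.val
  rw [hval, f_add, f_mul_c, mul_one] at this
  rw [χ, χ, χ, this]

lemma chi_abs (c : ℕ) [NeZero c] (t : ZMod c) (k : ZMod c) : ‖χ c t k‖ = 1 := by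
  have : -2 * (Real.pi : ℂ) * Complex.I * ((k.val : ℂ) * (t.val : ℂ)) / c
      = ((-2 * Real.pi * (k.val * t.val) / c : ℝ) : ℂ) * Complex.I := by
    push_cast
    ring
  rw [χ, f, this, Complex.norm_exp_ofReal_mul_I]

lemma chi_mul_conj (c : ℕ) [NeZero c] (t : ZMod c) (k : ZMod c) :
    χ c t k * (starRingEnd ℂ) (χ c t k) = 1 := by
  rw [Complex.mul_conj, ← Complex.sq_norm, chi_abs]
  norm_num

end LewinAux

open LewinAux in
/-- (Lewin) The discrete Fourier transform of the interval content of `A` equals the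
squared modulus of the Fourier transform of `A`. -/
theorem fourier_intervalContent_eq_sq_abs (c : ℕ) [NeZero c] (A : Finset (ZMod c))
    (t : ZMod c) :
    ∑ k : ZMod c, (intervalContent c A k : ℂ) *
        Complex.exp (-2 * Real.pi * Complex.I * ((k.val : ℂ) * (t.val : ℂ)) / c) =
      (‖fourierTransform c A t‖) ^ 2 := by
  have key : ∑ k : ZMod c, (intervalContent c A k : ℂ) * χ c t k
      = ∑ p ∈ A ×ˢ A, χ c t p.2 * (starRingEnd ℂ) (χ c t p.1) := by
    calc ∑ k : ZMod c, (intervalContent c A k : ℂ) * χ c t k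
        = ∑ k : ZMod c, ∑ p ∈ A ×ˢ A, if p.1 + k = p.2 then χ c t k else 0 := by
          refine Finset.sum_congr rfl fun k _ => ?_
          rw [← Finset.sum_filter, Finset.sum_const, intervalContent, nsmul_eq_mul]
      _ = ∑ p ∈ A ×ˢ A, ∑ k : ZMod c, if p.1 + k = p.2 then χ c t k else 0 :=
          Finset.sum_comm
      _ = ∑ p ∈ A ×ˢ A, χ c t (p.2 - p.1) := by
          refine Finset.sum_congr rfl fun p _ => ?_
          simp only [← eq_sub_iff_add_eq']
          simp [Finset.sum_ite_eq']
      _ = ∑ p ∈ A ×ˢ A, χ c t p.2 * (starRingEnd ℂ) (χ c t p.1) := by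
          refine Finset.sum_congr rfl fun p _ => ?_
          have h1 : χ c t p.2 = χ c t p.1 * χ c t (p.2 - p.1) := by
            rw [← chi_hom, add_sub_cancel]
          rw [h1]
          have := chi_mul_conj c t p.1
          ring_nf
          rw [mul_comm (χ c t p.1), mul_assoc, this, mul_one]
  have hF : fourierTransform c A t = ∑ k ∈ A, χ c t k := rfl
  calc ∑ k : ZMod c, (intervalContent c A k : ℂ) *
        Complex.exp (-2 * Real.pi * Complex.I * ((k.val : ℂ) * (t.val : ℂ)) / c)
      = ∑ p ∈ A ×ˢ A, χ c t p.2 * (starRingEnd ℂ) (χ c t p.1) := key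
    _ = fourierTransform c A t * (starRingEnd ℂ) (fourierTransform c A t) := by
        rw [hF, map_sum, Finset.sum_mul_sum, Finset.sum_product]
        exact Finset.sum_comm
    _ = (‖fourierTransform c A t‖) ^ 2 := by
        rw [Complex.mul_conj, ← Complex.sq_norm]
        norm_num
end

section
/- (Babbitt's hexachord theorem) Let c be an even positive integer and let A be a subset of ZMod c of cardinality c/2, with complement B = (ZMod c) \ A. Then A and B have the same interval content: IC_A(k) = IC_B(k) for all k ∈ ZMod c. -/
lemma ic_eq (c : ℕ) (A : Finset (ZMod c)) (k : ZMod c) :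
    intervalContent c A k = (A.filter (fun x => x + k ∈ A)).card := by
  unfold intervalContent
  apply Finset.card_bij (fun p _ => p.1)
  · rintro ⟨x, y⟩ hp
    simp only [Finset.mem_filter, Finset.mem_product] at hp ⊢
    exact ⟨hp.1.1, hp.2 ▸ hp.1.2⟩
  · rintro ⟨x, y⟩ hp ⟨x', y'⟩ hp' h
    simp only [Finset.mem_filter, Finset.mem_product] at hp hp'
    simp only at h
    subst h
    simp [Prod.ext_iff, ← hp.2, ← hp'.2]
  · intro x hx
    simp only [Finset.mem_filter] at hx
    exact ⟨(x, x + k), by simp [Finset.mem_filter, hx.1, hx.2], rfl⟩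

lemma split_count (c : ℕ) [NeZero c] (A T : Finset (ZMod c)) (k : ZMod c) :
    (A.filter (fun x => x + k ∈ T)).card + (Aᶜ.filter (fun x => x + k ∈ T)).card
      = T.card := by
  rw [← Finset.card_union_of_disjoint]
  · rw [← Finset.filter_union, Finset.union_compl]
    apply Finset.card_bij (fun x _ => x + k)
    · intro x hx; simpa using (Finset.mem_filter.mp hx).2
    · intro x _ y _ h; exact add_right_cancel h
    · intro y hy; exact ⟨y - k, by simp [hy], by ring⟩
  · exact Finset.disjoint_filter_filter disjoint_compl_right

/-- (Babbitt's hexachord theorem) Two complementary subsets of `ZMod c` (`c` even)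
of the same cardinality `c / 2` have the same interval content. -/
theorem hexachord (c : ℕ) [NeZero c] (hc : Even c) (A : Finset (ZMod c))
    (hA : A.card = c / 2) (k : ZMod c) :
    intervalContent c A k = intervalContent c Aᶜ k := by
  have hcard : Aᶜ.card = A.card := by
    rw [Finset.card_compl, ZMod.card, hA]
    obtain ⟨m, rfl⟩ := hc
    omega
  have h1 := split_count c A A k
  have h2 := split_count c A Aᶜ k
  have h3 : (A.filter (fun x => x + k ∈ A)).card + (A.filter (fun x => x + k ∈ Aᶜ)).card
      = A.card := by
    rw [← Finset.card_union_of_disjoint, Finset.filter_union_right]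
    · congr 1; apply Finset.filter_true_of_mem; intro x _; simp [em]
    · simp only [Finset.disjoint_left, Finset.mem_filter, Finset.mem_compl]
      tauto
  rw [ic_eq, ic_eq]
  omega
end

section
/- Let c be a positive integer and A a subset of ZMod c of cardinality d ≥ 1. If |F_A((d : ZMod c))| = d, then d divides c and A is a regular polygon: there exists a₀ ∈ ZMod c such that A = {a₀ + k·(c/d) : k = 0, 1, …, d-1}. -/
/-- If `A ⊆ ZMod c` has cardinality `d ≥ 1` and `|F_A(d)| = d`, then `d` divides `c`
and `A` is a regular polygon `{a₀, a₀ + c/d, …, a₀ + (d-1)·(c/d)}`. -/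
theorem regular_polygon_of_max_fourier (c : ℕ) (hc : 0 < c) (d : ℕ) (hd : 1 ≤ d)
    (A : Finset (ZMod c)) (hA : A.card = d)
    (h : ‖fourierTransform c A (d : ZMod c)‖ = d) :
    d ∣ c ∧ ∃ a₀ : ZMod c,
      A = (Finset.range d).image (fun k => a₀ + ((k * (c / d) : ℕ) : ZMod c)) := by
  haveI : NeZero c := ⟨hc.ne'⟩
  set t : ZMod c := (d : ZMod c) with ht
  have hcR : (c : ℝ) ≠ 0 := Nat.cast_ne_zero.mpr hc.ne'
  -- the primitive root
  set ξ : ℂ := Complex.exp (-2 * Real.pi * Complex.I / c) with hξ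
  have hprim : IsPrimitiveRoot ξ c := by
    have h1 := Complex.isPrimitiveRoot_exp c hc.ne'
    have : ξ = (Complex.exp (2 * Real.pi * Complex.I / c))⁻¹ := by
      rw [hξ, ← Complex.exp_neg]; congr 1; ring
    rw [this]
    exact h1.inv
  -- each term is ξ ^ (a.val * t.val)
  have hterm : ∀ a : ZMod c,
      Complex.exp (-2 * Real.pi * Complex.I * ((a.val : ℂ) * (t.val : ℂ)) / c)
        = ξ ^ (a.val * t.val) := by
    intro a
    rw [hξ, ← Complex.exp_nat_mul]
    congr 1
    push_cast
    ring
  -- each term has modulus 1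
  have habs1 : ∀ a : ZMod c, ‖ξ ^ (a.val * t.val)‖ = 1 := by
    intro a
    rw [norm_pow]
    have : ξ = Complex.exp ((-2 * Real.pi / c : ℝ) * Complex.I) := by
      rw [hξ]; push_cast; congr 1; ring
    rw [this, Complex.norm_exp_ofReal_mul_I, one_pow]
  have hAne : A.Nonempty := Finset.card_pos.mp (by omega)
  obtain ⟨a₀, ha₀⟩ := hAne
  -- all terms are equal
  set S : ℂ := fourierTransform c A t with hS
  have hSw : S * (starRingEnd ℂ) S = ((d : ℝ) ^ 2 : ℝ) := by
    rw [Complex.mul_conj, ← Complex.sq_norm, h]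
  set w : ℂ := (starRingEnd ℂ) S with hw
  have habsw : ‖w‖ = d := by rw [hw, Complex.norm_conj, h]
  have hsum : ∑ a ∈ A, (ξ ^ (a.val * t.val) * w) = ((d : ℝ) ^ 2 : ℝ) := by
    rw [← Finset.sum_mul, ← hSw]
    congr 1
    rw [hS, fourierTransform]
    exact Finset.sum_congr rfl fun a _ => (hterm a).symm
  have hsumre : ∑ a ∈ A, (ξ ^ (a.val * t.val) * w).re = (d : ℝ) ^ 2 := by
    have := congrArg Complex.re hsum
    rwa [Complex.re_sum, Complex.ofReal_re] at this
  have habsd : ∀ a : ZMod c, ‖ξ ^ (a.val * t.val) * w‖ = d := by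
    intro a
    rw [norm_mul, habs1, habsw, one_mul]
  have hle : ∀ a ∈ A, (ξ ^ (a.val * t.val) * w).re ≤ (d : ℝ) := by
    intro a _
    calc (ξ ^ (a.val * t.val) * w).re ≤ ‖ξ ^ (a.val * t.val) * w‖ :=
          Complex.re_le_norm _
      _ = d := habsd a
  have hre_eq : ∀ a ∈ A, (ξ ^ (a.val * t.val) * w).re = (d : ℝ) := by
    have := (Finset.sum_eq_sum_iff_of_le hle).mp ?_
    · intro a ha; exact this a ha
    · rw [hsumre, Finset.sum_const, hA, nsmul_eq_mul]
      ring
  have hterm_eq : ∀ a ∈ A, ξ ^ (a.val * t.val) * w = ((d : ℝ) : ℂ) := by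
    intro a ha
    have h1 : |(ξ ^ (a.val * t.val) * w).re| = ‖ξ ^ (a.val * t.val) * w‖ := by
      rw [hre_eq a ha, habsd a]
      exact abs_of_nonneg (Nat.cast_nonneg d)
    have him := Complex.abs_re_eq_norm.mp h1
    apply Complex.ext
    · rw [hre_eq a ha, Complex.ofReal_re]
    · rw [him, Complex.ofReal_im]
  have hwne : w ≠ 0 := by
    intro h0
    rw [h0, norm_zero] at habsw
    have : (d : ℝ) = 0 := habsw.symm
    have : d = 0 := by exact_mod_cast this
    omega
  have hξne : ξ ≠ 0 := Complex.exp_ne_zero _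
  have hpow : ∀ x y : ℕ, ξ ^ x = ξ ^ y → x ≡ y [MOD c] := by
    have key : ∀ x y : ℕ, y ≤ x → ξ ^ x = ξ ^ y → x ≡ y [MOD c] := by
      intro x y hxy hxyeq
      have h7 : ξ ^ (x - y) * ξ ^ y = 1 * ξ ^ y := by
        rw [← pow_add, Nat.sub_add_cancel hxy, one_mul, hxyeq]
      have h8 := mul_right_cancel₀ (pow_ne_zero y hξne) h7
      have h9 : c ∣ x - y := (hprim.pow_eq_one_iff_dvd _).mp h8
      exact ((Nat.modEq_iff_dvd' hxy).mpr h9).symm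
    intro x y hxy
    rcases le_total y x with hle' | hle'
    · exact key x y hle' hxy
    · exact (key y x hle' hxy.symm).symm
  -- hence for a, b in A : (a - b) * t = 0
  have hkey : ∀ a ∈ A, ∀ b ∈ A, a * t = b * t := by
    intro a ha b hb
    have : ξ ^ (a.val * t.val) = ξ ^ (b.val * t.val) :=
      mul_right_cancel₀ hwne ((hterm_eq a ha).trans (hterm_eq b hb).symm)
    have hmod : a.val * t.val ≡ b.val * t.val [MOD c] := hpow _ _ this
    have := (ZMod.natCast_eq_natCast_iff _ _ _).mpr hmod
    push_cast at this
    simp only [ZMod.natCast_val, ZMod.cast_id] at this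
    exact this
  -- structure of A
  set g := Nat.gcd d c with hg
  have hgpos : 0 < g := Nat.gcd_pos_of_pos_right _ hc
  have hgd : g ∣ d := Nat.gcd_dvd_left d c
  have hgc : g ∣ c := Nat.gcd_dvd_right d c
  have hcg : c / g * g = c := Nat.div_mul_cancel hgc
  have hcgpos : 0 < c / g := Nat.div_pos (Nat.le_of_dvd hc hgc) hgpos
  have hsub : A ⊆ (Finset.range g).image (fun k => a₀ + ((k * (c / g) : ℕ) : ZMod c)) := by
    intro a ha
    have hx : (a - a₀) * t = 0 := by
      rw [sub_mul, hkey a ha a₀ ha₀, sub_self]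
    set x := a - a₀ with hxdef
    have hdvd : c ∣ x.val * d := by
      rw [← ZMod.natCast_eq_zero_iff]
      push_cast
      rwa [ZMod.natCast_val, ZMod.cast_id, ← ht]
    -- c/g ∣ x.val
    have hdvd2 : c / g ∣ x.val := by
      have h5 : c / g * g ∣ x.val * (d / g * g) := by
        rw [hcg, Nat.div_mul_cancel hgd]; exact hdvd
      have h6 : c / g ∣ x.val * (d / g) := by
        rcases h5 with ⟨m, hm⟩
        refine ⟨m, Nat.eq_of_mul_eq_mul_right hgpos ?_⟩
        calc x.val * (d / g) * g = c / g * g * m := by rw [mul_assoc]; exact hm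
          _ = c / g * m * g := by ring
      have hcop : Nat.Coprime (d / g) (c / g) := Nat.coprime_div_gcd_div_gcd hgpos
      exact (Nat.Coprime.dvd_of_dvd_mul_right hcop.symm h6)
    obtain ⟨k, hk⟩ := hdvd2
    have hklt : k < g := by
      have hxlt : x.val < c := x.val_lt
      rw [hk] at hxlt
      by_contra hkge
      push_neg at hkge
      have : c ≤ c / g * k := by
        calc c = g * (c / g) := (Nat.mul_div_cancel' hgc).symm
          _ ≤ k * (c / g) := Nat.mul_le_mul_right _ hkge
          _ = c / g * k := Nat.mul_comm _ _
      omega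
    refine Finset.mem_image.mpr ⟨k, Finset.mem_range.mpr hklt, ?_⟩
    have : ((x.val : ℕ) : ZMod c) = ((k * (c / g) : ℕ) : ZMod c) := by
      rw [hk]; push_cast; ring
    rw [ZMod.natCast_val, ZMod.cast_id] at this
    rw [← this, hxdef]
    ring
  have hcard_le : ((Finset.range g).image
      (fun k => a₀ + ((k * (c / g) : ℕ) : ZMod c))).card ≤ g := by
    exact le_trans Finset.card_image_le (le_of_eq (Finset.card_range g))
  have hgled : g ≤ d := Nat.le_of_dvd (by omega) hgd
  have hdleg : d ≤ g := by
    calc d = A.card := hA.symm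
      _ ≤ _ := Finset.card_le_card hsub
      _ ≤ g := hcard_le
  have hgeq : g = d := le_antisymm hgled hdleg
  have hddvdc : d ∣ c := hgeq ▸ hgc
  refine ⟨hddvdc, a₀, ?_⟩
  have := Finset.eq_of_subset_of_card_le hsub (by rw [hA, ← hgeq]; exact hcard_le)
  rw [this, hgeq]
end

section
/- The complement of a maximally even set is maximally even: let c be a positive integer and A ⊆ ZMod c a maximally even set of cardinality d (with 0 < d < c). Then the complement (ZMod c) \ A, which has cardinality c - d, is a maximally even set of cardinality c - d. -/
/-- `A ⊆ ZMod c` is maximally even of cardinality `d` if `A` has cardinality `d` and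
`|F_A(d)| ≥ |F_B(d)|` for every subset `B` of cardinality `d`. -/
def MaximallyEven (c d : ℕ) (A : Finset (ZMod c)) : Prop :=
  A.card = d ∧ ∀ B : Finset (ZMod c), B.card = d →
    ‖fourierTransform c B (d : ZMod c)‖ ≤
      ‖fourierTransform c A (d : ZMod c)‖

/-- The full-set Fourier transform vanishes at nonzero `t`. -/
lemma fourierTransform_univ (c : ℕ) [NeZero c] (t : ZMod c) (ht : t ≠ 0) :
    fourierTransform c Finset.univ t = 0 := by
  have hc : 0 < c := Nat.pos_of_ne_zero (NeZero.ne c)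
  have htv : 0 < t.val := Nat.pos_of_ne_zero fun h => ht ((ZMod.val_eq_zero t).1 h)
  set ζ : ℂ := Complex.exp (-2 * Real.pi * Complex.I * (t.val : ℂ) / c) with hζdef
  have hterm : ∀ k : ZMod c,
      Complex.exp (-2 * Real.pi * Complex.I * ((k.val : ℂ) * (t.val : ℂ)) / c) = ζ ^ k.val := by
    intro k
    rw [hζdef, ← Complex.exp_nat_mul]
    congr 1
    ring
  have hrange : fourierTransform c Finset.univ t = ∑ j ∈ Finset.range c, ζ ^ j := by
    rw [fourierTransform]
    simp_rw [hterm]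
    refine Finset.sum_nbij' (fun k : ZMod c => k.val) (fun j : ℕ => (j : ZMod c))
      (fun k _ => Finset.mem_range.2 (ZMod.val_lt k)) (fun j _ => Finset.mem_univ _)
      (fun k _ => ?_) (fun j hj => ZMod.val_cast_of_lt (Finset.mem_range.1 hj))
      (fun k _ => rfl)
    exact ZMod.natCast_rightInverse k
  have hprim := Complex.isPrimitiveRoot_exp c (NeZero.ne c)
  have hω : ζ = (Complex.exp (2 * Real.pi * Complex.I / c) ^ t.val)⁻¹ := by
    rw [← Complex.exp_nat_mul, ← Complex.exp_neg, hζdef]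
    congr 1
    ring
  have hζc : ζ ^ c = 1 := by
    rw [hω, inv_pow, ← pow_mul, mul_comm t.val c, pow_mul, hprim.pow_eq_one, one_pow, inv_one]
  have hζ1 : ζ ≠ 1 := by
    rw [hω]
    simp only [ne_eq, inv_eq_one]
    exact hprim.pow_ne_one_of_pos_of_lt htv.ne' (ZMod.val_lt t)
  rw [hrange, geom_sum_eq hζ1, hζc, sub_self, zero_div]

/-- The Fourier transform of the complement at nonzero `t` is the negative. -/
lemma fourierTransform_compl (c : ℕ) [NeZero c] (S : Finset (ZMod c)) (t : ZMod c) (ht : t ≠ 0) :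
    fourierTransform c Sᶜ t = -fourierTransform c S t := by
  have h := Finset.sum_compl_add_sum S
    (fun k : ZMod c => Complex.exp (-2 * Real.pi * Complex.I * ((k.val : ℂ) * (t.val : ℂ)) / c))
  have h0 := fourierTransform_univ c t ht
  rw [fourierTransform] at h0
  unfold fourierTransform
  linear_combination h + h0

/-- The Fourier transform at `-t` is the conjugate of the one at `t` (for `t ≠ 0`). -/
lemma fourierTransform_neg (c : ℕ) [NeZero c] (S : Finset (ZMod c)) (t : ZMod c) (ht : t ≠ 0) :
    fourierTransform c S (-t) = (starRingEnd ℂ) (fourierTransform c S t) := by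
  unfold fourierTransform
  rw [map_sum]
  refine Finset.sum_congr rfl fun k _ => ?_
  rw [← Complex.exp_conj]
  have hval : ((-t).val : ℂ) = (c : ℂ) - (t.val : ℂ) := by
    rw [ZMod.neg_val, if_neg ht]
    push_cast [Nat.cast_sub (ZMod.val_lt t).le]
    ring
  have hconj : (starRingEnd ℂ) (-2 * Real.pi * Complex.I * ((k.val : ℂ) * (t.val : ℂ)) / c) =
      2 * Real.pi * Complex.I * ((k.val : ℂ) * (t.val : ℂ)) / c := by
    simp only [map_div₀, map_mul, map_neg, Complex.conj_I, map_ofNat, Complex.conj_ofReal,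
      Complex.conj_natCast]
    ring
  rw [hconj]
  have hc : (c : ℂ) ≠ 0 := Nat.cast_ne_zero.2 (NeZero.ne c)
  have : -2 * Real.pi * Complex.I * ((k.val : ℂ) * ((-t).val : ℂ)) / c =
      2 * Real.pi * Complex.I * ((k.val : ℂ) * (t.val : ℂ)) / c +
        (((-(k.val : ℤ) : ℤ)) : ℂ) * (2 * Real.pi * Complex.I) := by
    rw [hval]
    push_cast
    field_simp
    ring
  rw [this, Complex.exp_add, Complex.exp_int_mul_two_pi_mul_I, mul_one]

/-- The complement of a maximally even set of cardinality `d` (with `0 < d < c`)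
is a maximally even set of cardinality `c - d`. -/
theorem maximallyEven_compl (c : ℕ) [NeZero c] (d : ℕ) (hd : 0 < d) (hdc : d < c)
    (A : Finset (ZMod c)) (hA : MaximallyEven c d A) :
    MaximallyEven c (c - d) Aᶜ := by
  obtain ⟨hcard, hmax⟩ := hA
  have hcz : Fintype.card (ZMod c) = c := ZMod.card c
  have hdne : (d : ZMod c) ≠ 0 := by
    rw [Ne, ZMod.natCast_eq_zero_iff]
    exact fun h => absurd (Nat.le_of_dvd hd h) (not_le.2 hdc)
  have ht0 : ((c - d : ℕ) : ZMod c) = -(d : ZMod c) := by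
    push_cast [Nat.cast_sub hdc.le]
    simp
  have ht0ne : ((c - d : ℕ) : ZMod c) ≠ 0 := by
    rw [ht0, neg_ne_zero]
    exact hdne
  constructor
  · rw [Finset.card_compl, hcz, hcard]
  · intro B hB
    have key : ∀ S : Finset (ZMod c),
        ‖fourierTransform c S ((c - d : ℕ) : ZMod c)‖ =
          ‖fourierTransform c Sᶜ ((d : ℕ) : ZMod c)‖ := by
      intro S
      have h1 := fourierTransform_compl c Sᶜ _ ht0ne
      rw [compl_compl] at h1
      rw [h1, norm_neg, ht0, fourierTransform_neg c Sᶜ _ hdne, Complex.norm_conj]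
    rw [key B, key Aᶜ, compl_compl]
    have hBc : Bᶜ.card = d := by
      rw [Finset.card_compl, hcz, hB, Nat.sub_sub_self hdc.le]
    exact hmax Bᶜ hBc
end

section
/- Let c be a positive integer and 1 ≤ d ≤ c. Among all subsets A of ZMod c of cardinality d, the quantity |∑_{k ∈ A} exp(2πi·k.val/c)| is maximal exactly when the points of A are consecutive: for every A ⊆ ZMod c with |A| = d one has |∑_{k ∈ A} exp(2πi·k.val/c)| ≤ |∑_{j=0}^{d-1} exp(2πi·j/c)|, with equality if and only if A is a translate of {0, 1, …, d-1}, i.e. there exists t ∈ ZMod c with A = {t + (j : ZMod c) : j = 0, …, d-1}. -/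
open Complex Finset

noncomputable def EE (c : ℕ) (n : ℤ) : ℂ := Complex.exp (2 * Real.pi * Complex.I * n / c)

lemma EE_add (c : ℕ) (a b : ℤ) : EE c (a + b) = EE c a * EE c b := by
  rw [EE, EE, EE, ← Complex.exp_add]; congr 1; push_cast; ring

lemma EE_abs (c : ℕ) (n : ℤ) : Norm.norm (EE c n) = 1 := by
  rw [EE]
  have : 2 * (Real.pi:ℂ) * Complex.I * n / c = ((2 * Real.pi * n / c : ℝ) : ℂ) * Complex.I := by
    push_cast; ring
  rw [this, Complex.norm_exp_ofReal_mul_I]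

lemma EE_congr' {c : ℕ} (hc : c ≠ 0) {a b : ℤ} (h : (c:ℤ) ∣ (a - b)) : EE c a = EE c b := by
  obtain ⟨q, hq⟩ := h
  have ha : a = b + q * c := by linarith
  rw [ha, EE_add]
  have h1 : EE c (q * c) = 1 := by
    rw [EE]
    have h2 : 2 * (Real.pi:ℂ) * Complex.I * ((q:ℤ) * (c:ℤ) : ℤ) / c = (q:ℂ) * (2 * Real.pi * Complex.I) := by
      have hc' : (c:ℂ) ≠ 0 := Nat.cast_ne_zero.mpr hc
      push_cast
      field_simp
    rw [h2, Complex.exp_int_mul_two_pi_mul_I]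
  rw [h1, mul_one]

lemma EE_val_intCast {c : ℕ} (hc : c ≠ 0) (n : ℤ) :
    EE c (((n : ZMod c)).val : ℤ) = EE c n := by
  haveI : NeZero c := ⟨hc⟩
  apply EE_congr' hc
  rw [ZMod.val_intCast]
  exact ⟨-(n / c), by rw [Int.emod_def]; ring⟩

lemma EE_inj {c : ℕ} (hc : c ≠ 0) {k l : ZMod c} (h : EE c k.val = EE c l.val) : k = l := by
  haveI : NeZero c := ⟨hc⟩
  rw [EE, EE, Complex.exp_eq_exp_iff_exists_int] at h
  obtain ⟨n, hn⟩ := h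
  have hc' : (c:ℂ) ≠ 0 := Nat.cast_ne_zero.mpr hc
  have key : (2 * (Real.pi:ℂ) * Complex.I) * ((k.val:ℤ) : ℂ) =
      (2 * (Real.pi:ℂ) * Complex.I) * (((l.val:ℤ):ℂ) + n * c) := by
    have hn' := congrArg (fun z : ℂ => z * c) hn
    simp only [add_mul, div_mul_cancel₀ _ hc'] at hn'
    linear_combination hn'
  have h2' : ((k.val:ℤ) : ℂ) = ((l.val:ℤ):ℂ) + n * c :=
    mul_left_cancel₀ Complex.two_pi_I_ne_zero key
  have h2 : (k.val : ℤ) = (l.val : ℤ) + n * c := by exact_mod_cast h2'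
  have hk := ZMod.val_lt k
  have hl := ZMod.val_lt l
  have hm : (k.val:ℤ) - (l.val:ℤ) = (c:ℤ) * n := by linarith
  have habs : |(k.val:ℤ) - (l.val:ℤ)| < c := by rw [abs_lt]; omega
  have h0 : (k.val:ℤ) - (l.val:ℤ) = 0 := Int.eq_zero_of_abs_lt_dvd ⟨n, hm⟩ habs
  exact ZMod.val_injective c (by omega)

lemma re_eq_cases {u v : ℂ} (habs : Norm.norm u = Norm.norm v) (hre : u.re = v.re) :
    v = u ∨ v = (starRingEnd ℂ) u := by
  have hn : Complex.normSq u = Complex.normSq v := by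
    rw [← Complex.sq_norm, ← Complex.sq_norm, habs]
  rw [Complex.normSq_apply, Complex.normSq_apply, hre] at hn
  have him : v.im ^ 2 = u.im ^ 2 := by nlinarith
  rcases sq_eq_sq_iff_eq_or_eq_neg.mp him with h | h
  · left; exact Complex.ext hre.symm h
  · right; exact Complex.ext (by simp [hre]) (by simp [h])

lemma eq_abs_of_re_eq_abs {u : ℂ} (h : u.re = Norm.norm u) :
    u = (Norm.norm u : ℂ) := by
  have hn : Complex.normSq u = u.re ^ 2 := by
    rw [← Complex.sq_norm, ← h]
  rw [Complex.normSq_apply] at hn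
  have him : u.im = 0 := by nlinarith
  exact Complex.ext (by simp [h]) (by simp [him])

lemma re_w_EE {c : ℕ} (w : ℂ) (hw : Norm.norm w = 1) (n : ℤ) :
    (w * EE c n).re = Real.cos (w.arg + 2 * Real.pi * n / c) := by
  set θ := w.arg with hθ
  have hw' : w = Complex.exp ((θ : ℝ) * Complex.I) := by
    have := Complex.norm_mul_exp_arg_mul_I w
    rw [hw] at this
    simpa using this.symm
  rw [hw', EE, ← Complex.exp_add]
  have : (θ : ℂ) * Complex.I + 2 * Real.pi * Complex.I * n / c
      = ((θ + 2 * Real.pi * n / c : ℝ) : ℂ) * Complex.I := by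
    push_cast; ring
  rw [this, Complex.exp_ofReal_mul_I_re]

lemma top_arc_exists {c d : ℕ} (hc : 0 < c) (hdc : d ≤ c) (w : ℂ) (hw : Norm.norm w = 1) :
    ∃ t : ZMod c, ∀ x ∈ (Finset.range d).image (fun j : ℕ => (t + (j : ZMod c))),
      ∀ y : ZMod c, y ∉ (Finset.range d).image (fun j : ℕ => (t + (j : ZMod c))) →
        (w * EE c y.val).re ≤ (w * EE c x.val).re := by
  haveI : NeZero c := ⟨hc.ne'⟩
  have hc0 : (c:ℝ) ≠ 0 := by positivity
  have hcpos : (0:ℝ) < c := by exact_mod_cast hc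
  have hpi := Real.pi_pos
  have h2pi : (0:ℝ) ≤ 2 * Real.pi := by linarith
  set θ := w.arg with hθ
  set x₀ : ℝ := -(c:ℝ) * θ / (2 * Real.pi) with hx₀
  have gcos : ∀ n : ℤ, (w * EE c n).re = Real.cos (2 * Real.pi * ((n:ℝ) - x₀) / c) := by
    intro n
    rw [re_w_EE w hw n]
    congr 1
    rw [hx₀]
    field_simp
    ring
  have habs2 : ∀ z : ℝ, |2 * Real.pi * z / c| = 2 * Real.pi * |z| / c := by
    intro z
    rw [abs_div, abs_mul, _root_.abs_of_nonneg h2pi, _root_.abs_of_nonneg hcpos.le]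
  have hdR : (d:ℝ) ≤ c := Nat.cast_le.mpr hdc
  have hdpi : Real.pi * d / c ≤ Real.pi := by
    rw [div_le_iff₀ hcpos]
    nlinarith [mul_le_mul_of_nonneg_left hdR Real.pi_pos.le]
  set A : ℤ := ⌈x₀ - (d:ℝ)/2⌉ with hA
  have hA1 : x₀ - (d:ℝ)/2 ≤ A := Int.le_ceil _
  have hA2 : (A:ℝ) < x₀ - (d:ℝ)/2 + 1 := Int.ceil_lt_add_one _
  refine ⟨(A : ZMod c), ?_⟩
  intro x hx y hy
  have memT : ∀ m : ℤ, m ∈ Finset.Icc A (A + d - 1) →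
      ((m : ZMod c)) ∈ (Finset.range d).image (fun j : ℕ => ((A : ZMod c) + (j : ZMod c))) := by
    intro m hm
    rw [Finset.mem_Icc] at hm
    refine Finset.mem_image.mpr ⟨(m - A).toNat, Finset.mem_range.mpr (by omega), ?_⟩
    have h1 : (((m - A).toNat : ℕ) : ZMod c) = (((m - A) : ℤ) : ZMod c) := by
      rw [← Int.cast_natCast, Int.toNat_of_nonneg (by omega)]
    rw [h1, ← Int.cast_add]
    congr 1
    omega
  have inside : ∀ n : ℤ, n ∈ Finset.Icc A (A + d - 1) →
      Real.cos (Real.pi * d / c) ≤ Real.cos (2 * Real.pi * ((n:ℝ) - x₀) / c) := by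
    intro n hn
    rw [Finset.mem_Icc] at hn
    have h1 : |(n:ℝ) - x₀| ≤ (d:ℝ)/2 := by
      rw [abs_le]
      have l1 : (A:ℝ) ≤ n := by exact_mod_cast hn.1
      have l2 : (n:ℝ) ≤ A + d - 1 := by exact_mod_cast hn.2
      constructor <;> linarith
    rw [← Real.cos_abs (2 * Real.pi * ((n:ℝ) - x₀) / c), habs2]
    apply Real.cos_le_cos_of_nonneg_of_le_pi (by positivity) hdpi
    rw [div_le_div_iff₀ hcpos hcpos]
    nlinarith [mul_le_mul_of_nonneg_right (mul_le_mul_of_nonneg_left h1 h2pi) hcpos.le]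
  set m : ℤ := (y.val : ℤ) with hm
  set r : ℤ := round (((m:ℝ) - x₀)/c) with hr
  set m' : ℤ := m - c * r with hm'
  have hEEm : EE c (y.val : ℤ) = EE c m' := by
    apply EE_congr' hc.ne'
    exact ⟨r, by rw [hm']; ring⟩
  have hm'cast : ((m':ℤ):ℝ) = (m:ℝ) - c * r := by push_cast [hm']; ring
  have hhalf : |(m':ℝ) - x₀| ≤ (c:ℝ)/2 := by
    rw [hm'cast]
    have h := abs_sub_round (((m:ℝ) - x₀)/c)
    have heq : (m:ℝ) - c * r - x₀ = c * ((((m:ℝ) - x₀)/c) - r) := by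
      rw [hr]; field_simp; ring
    rw [heq, abs_mul, _root_.abs_of_nonneg hcpos.le]
    rw [hr]
    nlinarith [mul_le_mul_of_nonneg_left h hcpos.le]
  have hm'not : m' ∉ Finset.Icc A (A + d - 1) := by
    intro hmem
    apply hy
    have hcast : ((m' : ZMod c)) = y := by
      have h1 : ((m' : ZMod c)) = ((m : ZMod c)) := by
        rw [ZMod.intCast_eq_intCast_iff]
        exact Int.modEq_iff_dvd.mpr ⟨r, by rw [hm']; ring⟩
      rw [h1, hm]
      simp [ZMod.natCast_val, ZMod.cast_id]
    rw [← hcast]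
    exact memT m' hmem
  have hfar : (d:ℝ)/2 ≤ |(m':ℝ) - x₀| := by
    by_contra hlt
    push_neg at hlt
    rw [abs_lt] at hlt
    apply hm'not
    rw [Finset.mem_Icc]
    constructor
    · rw [hA]
      apply Int.ceil_le.mpr
      linarith
    · have h3 : (m':ℝ) < A + d := by linarith
      have h2 : m' < A + d := by exact_mod_cast h3
      omega
  have outside : Real.cos (2 * Real.pi * ((m':ℝ) - x₀) / c) ≤ Real.cos (Real.pi * d / c) := by
    rw [← Real.cos_abs (2 * Real.pi * ((m':ℝ) - x₀) / c), habs2]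
    apply Real.cos_le_cos_of_nonneg_of_le_pi (by positivity)
    · rw [div_le_iff₀ hcpos]
      nlinarith [mul_le_mul_of_nonneg_left hhalf h2pi]
    · rw [div_le_div_iff₀ hcpos hcpos]
      nlinarith [mul_le_mul_of_nonneg_right (mul_le_mul_of_nonneg_left hfar h2pi) hcpos.le]
  obtain ⟨j, hj, hxj⟩ := Finset.mem_image.mp hx
  rw [Finset.mem_range] at hj
  have hxval : EE c (x.val : ℤ) = EE c (A + j) := by
    have hcast : (((A + (j:ℤ)) : ℤ) : ZMod c) = x := by
      rw [← hxj]; push_cast; ring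
    rw [← hcast]
    exact EE_val_intCast hc.ne' _
  have hmemx : A + (j:ℤ) ∈ Finset.Icc A (A + d - 1) := by
    rw [Finset.mem_Icc]; omega
  have hAj : ((A + (j:ℤ) : ℤ):ℝ) = (A:ℝ) + (j:ℝ) := by push_cast; ring
  calc (w * EE c y.val).re = Real.cos (2 * Real.pi * ((m':ℝ) - x₀) / c) := by
        rw [hEEm, gcos]
    _ ≤ Real.cos (Real.pi * d / c) := outside
    _ ≤ Real.cos (2 * Real.pi * ((((A + (j:ℤ) : ℤ)):ℝ) - x₀) / c) := inside _ hmemx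
    _ = (w * EE c x.val).re := by rw [hxval, gcos]

lemma exp_eq_EE (c : ℕ) (k : ZMod c) :
    Complex.exp (2 * Real.pi * Complex.I * (k.val : ℂ) / c) = EE c (k.val : ℤ) := by
  rw [EE]; norm_num

lemma exp_eq_EE' (c : ℕ) (j : ℕ) :
    Complex.exp (2 * Real.pi * Complex.I * (j : ℂ) / c) = EE c (j : ℤ) := by
  rw [EE]; norm_num

lemma arc_card {c d : ℕ} (hc : 0 < c) (hdc : d ≤ c) (t : ZMod c) :
    ((Finset.range d).image (fun j : ℕ => (t + (j : ZMod c)))).card = d := by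
  haveI : NeZero c := ⟨hc.ne'⟩
  rw [Finset.card_image_of_injOn, Finset.card_range]
  intro a ha b hb hab
  simp only [Finset.coe_range, Set.mem_Iio] at ha hb
  have : (a : ZMod c) = (b : ZMod c) := by
    have := add_left_cancel hab
    exact this
  have := congrArg ZMod.val this
  rwa [ZMod.val_cast_of_lt (by omega), ZMod.val_cast_of_lt (by omega)] at this

lemma arc_sum {c d : ℕ} (hc : 0 < c) (hdc : d ≤ c) (t : ZMod c) :
    ∑ k ∈ (Finset.range d).image (fun j : ℕ => (t + (j : ZMod c))), EE c (k.val : ℤ)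
      = EE c (t.val : ℤ) * ∑ j ∈ Finset.range d, EE c (j : ℤ) := by
  haveI : NeZero c := ⟨hc.ne'⟩
  rw [Finset.sum_image, Finset.mul_sum]
  · apply Finset.sum_congr rfl
    intro j hj
    have hcast : (((t.val : ℤ) + (j:ℤ) : ℤ) : ZMod c) = t + (j : ZMod c) := by
      push_cast
      simp [ZMod.natCast_val, ZMod.cast_id]
    rw [← hcast, EE_val_intCast hc.ne', EE_add]
  · intro a ha b hb hab
    simp only [Finset.coe_range, Set.mem_Iio] at ha hb
    have h1 : (a : ZMod c) = (b : ZMod c) := add_left_cancel hab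
    have := congrArg ZMod.val h1
    rwa [ZMod.val_cast_of_lt (by omega), ZMod.val_cast_of_lt (by omega)] at this

lemma sum_range_ne_zero {c d : ℕ} (hd1 : 1 ≤ d) (hdlt : d < c) :
    ∑ j ∈ Finset.range d, EE c (j : ℤ) ≠ 0 := by
  have hc : c ≠ 0 := by omega
  have prim := Complex.isPrimitiveRoot_exp c hc
  set ζ := Complex.exp (2 * Real.pi * Complex.I / c) with hζ
  have hEj : ∀ j : ℕ, EE c (j:ℤ) = ζ ^ j := by
    intro j
    rw [EE, hζ, ← Complex.exp_nat_mul]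
    congr 1
    push_cast
    ring
  have hζ1 : ζ ≠ 1 := by
    intro h
    have : c ∣ 1 := prim.dvd_of_pow_eq_one 1 (by rw [h, one_pow])
    have := Nat.le_of_dvd one_pos this
    omega
  have hζd : ζ ^ d ≠ 1 := by
    intro h
    have hdvd : c ∣ d := prim.dvd_of_pow_eq_one d h
    exact absurd (Nat.le_of_dvd (by omega) hdvd) (by omega)
  calc ∑ j ∈ Finset.range d, EE c (j : ℤ) = ∑ j ∈ Finset.range d, ζ ^ j :=
        Finset.sum_congr rfl (fun j _ => hEj j)
    _ = (ζ ^ d - 1) / (ζ - 1) := geom_sum_eq hζ1 d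
    _ ≠ 0 := div_ne_zero (sub_ne_zero.mpr hζd) (sub_ne_zero.mpr hζ1)

lemma sum_sdiff_le {c : ℕ} (g : ZMod c → ℝ) (A T : Finset (ZMod c))
    (hcard : A.card = T.card)
    (cross : ∀ x ∈ T, ∀ y : ZMod c, y ∉ T → g y ≤ g x) :
    (∑ k ∈ A, g k ≤ ∑ k ∈ T, g k) ∧
    (∑ k ∈ A, g k = ∑ k ∈ T, g k → ∀ y ∈ A \ T, ∀ x ∈ T \ A, g y = g x) := by
  have hcard2 : (A \ T).card = (T \ A).card := by
    have h1 := Finset.card_inter_add_card_sdiff A T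
    have h2 := Finset.card_inter_add_card_sdiff T A
    rw [Finset.inter_comm] at h2
    omega
  set σ := Finset.equivOfCardEq hcard2 with hσ
  have hpoint : ∀ b : {x // x ∈ T \ A}, g (σ.symm b : ZMod c) ≤ g (b : ZMod c) := by
    intro b
    have hb1 : (b : ZMod c) ∈ T := (Finset.mem_sdiff.mp b.2).1
    have hb2 : ((σ.symm b : {x // x ∈ A \ T}) : ZMod c) ∉ T :=
      (Finset.mem_sdiff.mp (σ.symm b).2).2
    exact cross _ hb1 _ hb2
  have hsd : ∑ k ∈ A \ T, g k = ∑ b : {x // x ∈ T \ A}, g (σ.symm b : ZMod c) := by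
    rw [← Finset.sum_coe_sort (A \ T) g]
    exact (Equiv.sum_comp σ.symm (fun a : {x // x ∈ A \ T} => g (a : ZMod c))).symm
  have hsd2 : ∑ k ∈ T \ A, g k = ∑ b : {x // x ∈ T \ A}, g (b : ZMod c) :=
    (Finset.sum_coe_sort (T \ A) g).symm
  have hdle : ∑ k ∈ A \ T, g k ≤ ∑ k ∈ T \ A, g k := by
    rw [hsd, hsd2]
    exact Finset.sum_le_sum (fun b _ => hpoint b)
  have hdecA := Finset.sum_inter_add_sum_sdiff A T g
  have hdecT := Finset.sum_inter_add_sum_sdiff T A g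
  have hint : ∑ k ∈ A ∩ T, g k = ∑ k ∈ T ∩ A, g k := by rw [Finset.inter_comm]
  constructor
  · linarith
  · intro hsum y hy x hx
    have hdeq : ∑ k ∈ A \ T, g k = ∑ k ∈ T \ A, g k := by linarith
    have hzero : ∑ b : {x // x ∈ T \ A}, (g (b : ZMod c) - g (σ.symm b : ZMod c)) = 0 := by
      rw [Finset.sum_sub_distrib, ← hsd2, ← hsd, hdeq, sub_self]
    have hall : ∀ b : {x // x ∈ T \ A}, g (b : ZMod c) - g (σ.symm b : ZMod c) = 0 := by
      have := (Finset.sum_eq_zero_iff_of_nonneg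
        (fun b _ => sub_nonneg.mpr (hpoint b))).mp hzero
      intro b; exact this b (Finset.mem_univ b)
    -- g y = g x for y ∈ A\T, x ∈ T\A
    have hyx : g y ≤ g x := cross x (Finset.mem_sdiff.mp hx).1 y (Finset.mem_sdiff.mp hy).2
    -- x side: g x = g (σ.symm ⟨x⟩)
    have hx' : g ((σ.symm ⟨x, hx⟩ : {z // z ∈ A \ T}) : ZMod c) = g x := by
      have := hall ⟨x, hx⟩
      linarith
    -- y side: g y = g (σ ⟨y⟩)
    have hy' : g y = g ((σ ⟨y, hy⟩ : {z // z ∈ T \ A}) : ZMod c) := by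
      have := hall (σ ⟨y, hy⟩)
      rw [Equiv.symm_apply_apply] at this
      linarith
    have hxy2 : g ((σ.symm ⟨x, hx⟩ : {z // z ∈ A \ T}) : ZMod c)
        ≤ g ((σ ⟨y, hy⟩ : {z // z ∈ T \ A}) : ZMod c) :=
      cross _ (Finset.mem_sdiff.mp (σ ⟨y, hy⟩).2).1 _ (Finset.mem_sdiff.mp (σ.symm ⟨x, hx⟩).2).2
    linarith

/-- Among the subsets of `ZMod c` of cardinality `d`, the quantity
`|∑_{k ∈ A} exp(2πi·k.val/c)|` is maximal exactly for the sets of `d` consecutive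
points, i.e. the translates of `{0, 1, …, d-1}`. -/
theorem abs_sum_exp_le_consecutive (c d : ℕ) (hc : 0 < c) (hd1 : 1 ≤ d) (hdc : d ≤ c)
    (A : Finset (ZMod c)) (hA : A.card = d) :
    Norm.norm (∑ k ∈ A, Complex.exp (2 * Real.pi * Complex.I * (k.val : ℂ) / c)) ≤
      Norm.norm (∑ j ∈ Finset.range d,
        Complex.exp (2 * Real.pi * Complex.I * (j : ℂ) / c)) ∧
    (Norm.norm (∑ k ∈ A, Complex.exp (2 * Real.pi * Complex.I * (k.val : ℂ) / c)) =
        Norm.norm (∑ j ∈ Finset.range d,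
          Complex.exp (2 * Real.pi * Complex.I * (j : ℂ) / c)) ↔
      ∃ t : ZMod c, A = (Finset.range d).image (fun j : ℕ => (t + (j : ZMod c)))) := by
  haveI : NeZero c := ⟨hc.ne'⟩
  have hAsum : (∑ k ∈ A, Complex.exp (2 * Real.pi * Complex.I * (k.val : ℂ) / c))
      = ∑ k ∈ A, EE c (k.val : ℤ) := Finset.sum_congr rfl (fun k _ => exp_eq_EE c k)
  have hRsum : (∑ j ∈ Finset.range d, Complex.exp (2 * Real.pi * Complex.I * (j : ℂ) / c))
      = ∑ j ∈ Finset.range d, EE c (j : ℤ) := Finset.sum_congr rfl (fun j _ => exp_eq_EE' c j)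
  rw [hAsum, hRsum]
  have harc_abs : ∀ t : ZMod c,
      Norm.norm (∑ k ∈ (Finset.range d).image (fun j : ℕ => (t + (j : ZMod c))),
        EE c (k.val : ℤ)) = Norm.norm (∑ j ∈ Finset.range d, EE c (j : ℤ)) := by
    intro t
    rw [arc_sum hc hdc t, norm_mul, EE_abs, one_mul]
  by_cases hdeq : d = c
  · subst hdeq
    have hAuniv : A = Finset.univ := Finset.eq_univ_of_card A (by rw [hA, ZMod.card])
    have hTuniv : (Finset.range d).image (fun j : ℕ => ((0 : ZMod d) + (j : ZMod d)))
        = Finset.univ := by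
      apply Finset.eq_univ_of_card
      rw [arc_card hc hdc, ZMod.card]
    have heq : Norm.norm (∑ k ∈ A, EE d (k.val:ℤ))
        = Norm.norm (∑ j ∈ Finset.range d, EE d (j : ℤ)) := by
      rw [hAuniv, ← hTuniv, harc_abs 0]
    exact ⟨le_of_eq heq, fun _ => ⟨0, by rw [hAuniv, hTuniv]⟩, fun _ => heq⟩
  · have hdlt : d < c := lt_of_le_of_ne hdc hdeq
    set R := ∑ j ∈ Finset.range d, EE c (j : ℤ) with hR
    set S := ∑ k ∈ A, EE c (k.val : ℤ) with hS
    have hRne : R ≠ 0 := sum_range_ne_zero hd1 hdlt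
    by_cases hS0 : S = 0
    · refine ⟨by rw [hS0]; simp, ?_, ?_⟩
      · intro h
        exfalso
        rw [hS0, norm_zero] at h
        exact hRne (norm_eq_zero.mp h.symm)
      · rintro ⟨t, ht⟩
        exfalso
        apply hRne
        have hSeq : S = EE c (t.val:ℤ) * R := by rw [hS, ht, arc_sum hc hdc, hR]
        rw [hS0] at hSeq
        have hE0 : EE c (t.val:ℤ) ≠ 0 := by
          intro h0
          have h1 := EE_abs c (t.val:ℤ)
          rw [h0, norm_zero] at h1
          norm_num at h1
        exact ((mul_eq_zero.mp hSeq.symm).resolve_left hE0)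
    · set w : ℂ := (Norm.norm S : ℂ) / S with hw_def
      have hwS : w * S = (Norm.norm S : ℂ) := div_mul_cancel₀ _ hS0
      have hwne : w ≠ 0 := by
        rw [hw_def]
        apply div_ne_zero _ hS0
        exact_mod_cast (norm_ne_zero_iff.mpr hS0)
      have hw : Norm.norm w = 1 := by
        rw [hw_def, norm_div, Complex.norm_of_nonneg (norm_nonneg S)]
        exact div_self (norm_ne_zero_iff.mpr hS0)
      obtain ⟨t, htop⟩ := top_arc_exists hc hdc w hw
      set T := (Finset.range d).image (fun j : ℕ => (t + (j : ZMod c))) with hT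
      have hTcard : T.card = d := by rw [hT]; exact arc_card hc hdc t
      have hTabs : Norm.norm (∑ k ∈ T, EE c (k.val:ℤ)) = Norm.norm R := by
        rw [hT]; exact harc_abs t
      have key := sum_sdiff_le (fun k => (w * EE c (k.val:ℤ)).re) A T
        (by rw [hA, hTcard]) (fun x hx y hy => htop x hx y hy)
      have hre : ∀ B : Finset (ZMod c),
          ∑ k ∈ B, (w * EE c (k.val:ℤ)).re = (w * ∑ k ∈ B, EE c (k.val:ℤ)).re := by
        intro B
        rw [Finset.mul_sum, Complex.re_sum]
      have h1 : Norm.norm S = ∑ k ∈ A, (w * EE c (k.val:ℤ)).re := by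
        rw [hre A, ← hS, hwS, Complex.ofReal_re]
      have h5 : ∑ k ∈ T, (w * EE c (k.val:ℤ)).re ≤ Norm.norm R := by
        rw [hre T]
        calc (w * ∑ k ∈ T, EE c (k.val:ℤ)).re
            ≤ Norm.norm (w * ∑ k ∈ T, EE c (k.val:ℤ)) := Complex.re_le_norm _
          _ = Norm.norm R := by rw [norm_mul, hw, one_mul, hTabs]
      have hineq : Norm.norm S ≤ Norm.norm R := by
        rw [h1]; exact le_trans key.1 h5
      refine ⟨hineq, ?_, ?_⟩
      · intro heq
        have hsumeq : ∑ k ∈ A, (w * EE c (k.val:ℤ)).re = ∑ k ∈ T, (w * EE c (k.val:ℤ)).re := by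
          have := key.1
          linarith
        -- the rotated arc sum is real nonnegative, hence equals the rotated A sum
        have hTre : (w * ∑ k ∈ T, EE c (k.val:ℤ)).re
            = Norm.norm (w * ∑ k ∈ T, EE c (k.val:ℤ)) := by
          rw [← hre T, norm_mul, hw, one_mul, hTabs]
          linarith
        have hwT : w * ∑ k ∈ T, EE c (k.val:ℤ) = ((Norm.norm S : ℝ) : ℂ) := by
          have h2 := eq_abs_of_re_eq_abs hTre
          rw [h2, norm_mul, hw, one_mul, hTabs, heq]
        have hST : ∑ k ∈ T, EE c (k.val:ℤ) = S := by
          apply mul_left_cancel₀ hwne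
          rw [hwT, hwS]
        refine ⟨t, ?_⟩
        rw [← hT]
        by_contra hne
        have hgeq := key.2 hsumeq
        have hABne : (A \ T).Nonempty := by
          rw [Finset.sdiff_nonempty]
          intro hsub
          exact hne (Finset.eq_of_subset_of_card_le hsub (by rw [hA, hTcard]))
        obtain ⟨y, hy⟩ := hABne
        have hcard2 : (A \ T).card = (T \ A).card := by
          have hh1 := Finset.card_inter_add_card_sdiff A T
          have hh2 := Finset.card_inter_add_card_sdiff T A
          rw [Finset.inter_comm] at hh2
          rw [hA] at hh1
          rw [hTcard] at hh2
          omega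
        have hTAne : (T \ A).Nonempty := by
          rw [← Finset.card_pos, ← hcard2, Finset.card_pos]
          exact ⟨y, hy⟩
        have hynotT : y ∉ T := (Finset.mem_sdiff.mp hy).2
        by_cases hone : (T \ A).card = 1
        · obtain ⟨x0, hx0⟩ := Finset.card_eq_one.mp hone
          obtain ⟨y0, hy0⟩ := Finset.card_eq_one.mp (hcard2.trans hone)
          have hdT := Finset.sum_inter_add_sum_sdiff T A (fun k => EE c (k.val:ℤ))
          have hdA := Finset.sum_inter_add_sum_sdiff A T (fun k => EE c (k.val:ℤ))
          rw [Finset.inter_comm] at hdT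
          have hdiffeq : ∑ k ∈ T \ A, EE c (k.val:ℤ) = ∑ k ∈ A \ T, EE c (k.val:ℤ) := by
            have hS' : S = ∑ k ∈ A, EE c (k.val:ℤ) := hS
            linear_combination hdT - hdA + hST + hS'
          rw [hx0, hy0, Finset.sum_singleton, Finset.sum_singleton] at hdiffeq
          have hx0y0 : x0 = y0 := EE_inj hc.ne' hdiffeq
          have hx0T : x0 ∈ T := (Finset.mem_sdiff.mp (hx0 ▸ Finset.mem_singleton_self x0)).1
          have hy0T : y0 ∉ T := (Finset.mem_sdiff.mp (hy0 ▸ Finset.mem_singleton_self y0)).2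
          rw [hx0y0] at hx0T
          exact hy0T hx0T
        · have h2lt : 1 < (T \ A).card :=
            lt_of_le_of_ne (Finset.card_pos.mpr hTAne) (Ne.symm hone)
          obtain ⟨x1, hx1, x2, hx2, hx12⟩ := Finset.one_lt_card.mp h2lt
          have e1 : (w * EE c (y.val:ℤ)).re = (w * EE c (x1.val:ℤ)).re := hgeq y hy x1 hx1
          have e2 : (w * EE c (y.val:ℤ)).re = (w * EE c (x2.val:ℤ)).re := hgeq y hy x2 hx2
          have habs12 : Norm.norm (w * EE c (x1.val:ℤ)) = Norm.norm (w * EE c (x2.val:ℤ)) := by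
            rw [norm_mul, norm_mul, EE_abs, EE_abs]
          have habsy : Norm.norm (w * EE c (x1.val:ℤ)) = Norm.norm (w * EE c (y.val:ℤ)) := by
            rw [norm_mul, norm_mul, EE_abs, EE_abs]
          have hx1T : x1 ∈ T := (Finset.mem_sdiff.mp hx1).1
          have hx2T : x2 ∈ T := (Finset.mem_sdiff.mp hx2).1
          rcases re_eq_cases habs12 (e1.symm.trans e2) with h12 | h12
          · exact hx12 (EE_inj hc.ne' (mul_left_cancel₀ hwne h12)).symm
          · rcases re_eq_cases habsy e1.symm with hy1 | hy1
            · have : y = x1 := EE_inj hc.ne' (mul_left_cancel₀ hwne hy1)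
              rw [this] at hynotT
              exact hynotT hx1T
            · have hyx2 : w * EE c (y.val:ℤ) = w * EE c (x2.val:ℤ) := by
                rw [hy1, ← h12]
              have : y = x2 := EE_inj hc.ne' (mul_left_cancel₀ hwne hyx2)
              rw [this] at hynotT
              exact hynotT hx2T
      · rintro ⟨t', ht'⟩
        rw [hS, ht', hR]
        exact harc_abs t'
end

section
/- (Lemma of tightly packed points) Let d ≥ 1 and let a_1, …, a_d be complex numbers of modulus 1 whose sum S = a_1 + ⋯ + a_d is a nonnegative real number. Let θ = arg(a_1) ∈ [0, π] and let θ' be a real number with 0 ≤ θ' ≤ θ. Then replacing a_1 by exp(iθ') does not decrease the modulus of the sum: |exp(iθ') + a_2 + ⋯ + a_d| ≥ |S|. -/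
/-- (Lemma of tightly packed points) Let `a 0, …, a (d-1)` be unit complex numbers whose
sum `S` is a nonnegative real, let `θ = arg (a 0) ∈ [0, π]` and `0 ≤ θ' ≤ θ`.
Then replacing `a 0` by `exp(iθ')` does not decrease the modulus of the sum. -/
theorem tightly_packed_points (d : ℕ) (hd : 1 ≤ d) (a : Fin d → ℂ)
    (ha : ∀ i, ‖a i‖ = 1)
    (hSim : (∑ i, a i).im = 0) (hSre : 0 ≤ (∑ i, a i).re)
    (θ' : ℝ) (hθ'0 : 0 ≤ θ') (hθ' : θ' ≤ Complex.arg (a ⟨0, hd⟩)) :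
    ‖∑ i, a i‖ ≤
      ‖Complex.exp (θ' * Complex.I) +
        ∑ i ∈ Finset.univ.erase ⟨0, hd⟩, a i‖ := by
  set i0 : Fin d := ⟨0, hd⟩
  have hsplit : (∑ i, a i) = a i0 + ∑ i ∈ Finset.univ.erase i0, a i :=
    (Finset.add_sum_erase _ a (Finset.mem_univ i0)).symm
  have ha0 : a i0 ≠ 0 := by
    intro h; have := ha i0; rw [h] at this; simp at this
  have hcos : (a i0).re = Real.cos (Complex.arg (a i0)) := by
    rw [Complex.cos_arg ha0, ha i0, div_one]
  have hcosle : (a i0).re ≤ Real.cos θ' := by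
    rw [hcos]
    exact Real.cos_le_cos_of_nonneg_of_le_pi hθ'0 (Complex.arg_le_pi _) hθ'
  have habs : ‖∑ i, a i‖ = (∑ i, a i).re := by
    rw [Complex.norm_def, Complex.normSq_apply, hSim]
    rw [mul_zero, add_zero]; exact Real.sqrt_mul_self hSre
  rw [habs]
  refine le_trans ?_ (Complex.re_le_norm _)
  rw [Complex.add_re, Complex.exp_ofReal_mul_I_re, hsplit, Complex.add_re]
  linarith
end

section
/- (Maximally even sets with gcd(c,d)=1 are generated scales) Let c, d be positive integers with gcd(c,d) = 1 and d ≤ c, and let A ⊆ ZMod c be a maximally even set of cardinality d. Then A is generated by f = (d : ZMod c)⁻¹, the multiplicative inverse of d modulo c: there exists t ∈ ZMod c such that A = {t + k·f : k = 1, 2, …, d}. -/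
open Complex Finset Real

namespace MEaux

noncomputable def zeta (c : ℕ) : ℂ := Complex.exp (-(2 * Real.pi * Complex.I) / c)

lemma zeta_pow (c : ℕ) (n : ℕ) :
    zeta c ^ n = Complex.exp (((-(2 * Real.pi * n / c) : ℝ) : ℂ) * I) := by
  rw [zeta, ← Complex.exp_nat_mul]
  congr 1
  push_cast
  ring

lemma zeta_pow_c (c : ℕ) (hc : 0 < c) : zeta c ^ c = 1 := by
  rw [zeta, ← Complex.exp_nat_mul]
  have hcC : (c : ℂ) ≠ 0 := Nat.cast_ne_zero.2 hc.ne'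
  rw [mul_div_cancel₀ _ hcC]
  simpa using Complex.exp_int_mul_two_pi_mul_I (-1)

lemma zeta_pow_mod (c : ℕ) (hc : 0 < c) (a : ℕ) : zeta c ^ a = zeta c ^ (a % c) := by
  conv_lhs => rw [← Nat.mod_add_div a c, pow_add, pow_mul, zeta_pow_c c hc, one_pow, mul_one]

/-- basic exponential attached to a residue -/
noncomputable def e (c : ℕ) (m : ZMod c) : ℂ := zeta c ^ m.val

lemma e_exp (c : ℕ) (m : ZMod c) :
    e c m = Complex.exp (((-(2 * Real.pi * (m.val : ℝ) / c) : ℝ) : ℂ) * I) := zeta_pow c m.val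

lemma angle_eq {θ θ' : ℝ}
    (h : Complex.exp ((θ:ℂ) * I) = Complex.exp ((θ':ℂ) * I)) :
    ∃ n : ℤ, θ = θ' + n * (2 * Real.pi) := by
  obtain ⟨n, hn⟩ := Complex.exp_eq_exp_iff_exists_int.1 h
  refine ⟨n, ?_⟩
  have := congrArg Complex.im hn
  simpa using this

lemma angle_inj {c : ℕ} (hc : 0 < c) {a b : ℕ} (ha : a < c) (hb : b < c)
    (h : Complex.exp (((-(2 * Real.pi * (a:ℝ) / c) : ℝ) : ℂ) * I)
       = Complex.exp (((-(2 * Real.pi * (b:ℝ) / c) : ℝ) : ℂ) * I)) : a = b := by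
  obtain ⟨n, hn⟩ := angle_eq h
  have hπ : (0:ℝ) < Real.pi := Real.pi_pos
  have hcR : (0:ℝ) < c := by exact_mod_cast hc
  have key : ((a : ℝ)) = (b : ℝ) - n * c := by
    field_simp at hn
    have h2 : ((a:ℝ)) * (2*Real.pi*c) = ((b:ℝ) - n*c) * (2*Real.pi*c) := by
      linear_combination (-(2*Real.pi*c)) * hn
    exact mul_right_cancel₀ (mul_pos (by positivity) hcR).ne' h2
  have keyZ : ((a : ℤ)) = (b : ℤ) - n * c := by exact_mod_cast key
  have hdvd : (c:ℤ) ∣ ((b:ℤ) - a) := ⟨n, by linear_combination -keyZ⟩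
  have habs : |(b:ℤ) - (a:ℤ)| < c := by rw [abs_lt]; omega
  have h0 := Int.eq_zero_of_abs_lt_dvd hdvd habs
  omega

lemma e_injective (c : ℕ) (hc : 0 < c) : Function.Injective (e c) := by
  haveI : NeZero c := ⟨hc.ne'⟩
  intro m m' h
  rw [e_exp, e_exp] at h
  have : m.val = m'.val := angle_inj hc (ZMod.val_lt m) (ZMod.val_lt m') h
  calc m = (m.val : ZMod c) := (ZMod.natCast_rightInverse m).symm
    _ = (m'.val : ZMod c) := by rw [this]
    _ = m' := ZMod.natCast_rightInverse m'

/-- rewriting the Fourier transform as a sum of `e` over a multiplicative image -/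
lemma fourier_eq (c : ℕ) (hc : 0 < c) (B : Finset (ZMod c)) (t : ZMod c)
    (hinj : Set.InjOn (· * t) B) :
    fourierTransform c B t = ∑ m ∈ B.image (· * t), e c m := by
  rw [Finset.sum_image (fun x hx y hy hxy => hinj hx hy hxy)]
  apply Finset.sum_congr rfl
  intro k _
  have h1 : Complex.exp (-2 * Real.pi * Complex.I * ((k.val : ℂ) * (t.val : ℂ)) / c)
      = zeta c ^ (k.val * t.val) := by
    rw [zeta_pow]
    congr 1
    push_cast
    ring
  rw [h1, zeta_pow_mod c hc, e, ZMod.val_mul]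


lemma zeta_pow_ne_one {c : ℕ} {j : ℕ} (hj : 0 < j) (hjc : j < c) : zeta c ^ j ≠ 1 := by
  have hc : 0 < c := hj.trans hjc
  have hcR : (0:ℝ) < c := by exact_mod_cast hc
  rw [zeta_pow]
  intro h
  obtain ⟨n, hn⟩ := Complex.exp_eq_one_iff.1 h
  have him := congrArg Complex.im hn
  simp at him
  -- him : -(2 * π * j / c) = n * (2 * π)
  have hπ : (0:ℝ) < Real.pi := Real.pi_pos
  have key : ((j : ℝ)) = -(n * c) := by
    field_simp at him
    have h2 : ((j:ℝ)) * (2*Real.pi) = (-(n*c) : ℝ) * (2*Real.pi) := by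
      linear_combination (-(2*Real.pi)) * him
    exact mul_right_cancel₀ (by positivity : (2*Real.pi) ≠ 0) h2
  have keyZ : ((j : ℤ)) = -(n * c) := by exact_mod_cast key
  have : (c:ℤ) ∣ (j:ℤ) := ⟨-n, by linear_combination keyZ⟩
  have : (c:ℤ) ≤ j := Int.le_of_dvd (by exact_mod_cast hj) this
  omega

/-- the sum over an initial arc is nonzero -/
lemma arc_sum_pos (c d : ℕ) (hd : 0 < d) (hdc : d < c) :
    0 < norm (∑ m ∈ (Finset.range d).image (Nat.cast : ℕ → ZMod c),
      e c m) := by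
  have hc : 0 < c := hd.trans hdc
  have hinj : Set.InjOn (Nat.cast : ℕ → ZMod c) (Finset.range d) := by
    intro x hx y hy hxy
    simp only [Finset.coe_range, Set.mem_Iio] at hx hy
    have := congrArg ZMod.val hxy
    rwa [ZMod.val_cast_of_lt (hx.trans hdc), ZMod.val_cast_of_lt (hy.trans hdc)] at this
  rw [Finset.sum_image (fun x hx y hy hxy => hinj hx hy hxy)]
  have hterm : ∀ k ∈ Finset.range d, e c ((k : ℕ) : ZMod c) = zeta c ^ k := by
    intro k hk
    rw [e, ZMod.val_cast_of_lt ((Finset.mem_range.1 hk).trans hdc)]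
  rw [Finset.sum_congr rfl hterm]
  have hz1 : zeta c ≠ 1 := by
    have := zeta_pow_ne_one (c := c) one_pos (lt_of_le_of_lt hd hdc)
    simpa using this
  rw [geom_sum_eq hz1]
  have hnum : zeta c ^ d - 1 ≠ 0 := sub_ne_zero.2 (zeta_pow_ne_one hd hdc)
  have hden : zeta c - 1 ≠ 0 := sub_ne_zero.2 hz1
  exact norm_pos_iff.2 (div_ne_zero hnum hden)

/-- strict exchange inequality at a maximizer -/
lemma exchange {c d : ℕ} (hc : 0 < c) (hd : 0 < d) {M : Finset (ZMod c)} (hM : M.card = d)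
    (hmax : ∀ N : Finset (ZMod c), N.card = d →
      norm (∑ x ∈ N, e c x) ≤ norm (∑ x ∈ M, e c x))
    (hS : (∑ x ∈ M, e c x) ≠ 0)
    {m m' : ZMod c} (hm : m ∉ M) (hm' : m' ∈ M) :
    (e c m * (starRingEnd ℂ) (∑ x ∈ M, e c x)).re
      < (e c m' * (starRingEnd ℂ) (∑ x ∈ M, e c x)).re := by
  set S := ∑ x ∈ M, e c x with hSdef
  set N : Finset (ZMod c) := insert m (M.erase m') with hN
  have hmN : m ∉ M.erase m' := fun h => hm (Finset.mem_of_mem_erase h)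
  have hNcard : N.card = d := by
    rw [hN, Finset.card_insert_of_notMem hmN, Finset.card_erase_of_mem hm', hM]
    omega
  have hsum : ∑ x ∈ N, e c x = e c m + (S - e c m') := by
    rw [hN, Finset.sum_insert hmN, Finset.sum_erase_eq_sub hm', hSdef]
  set S' := e c m + (S - e c m') with hS'
  have h1 : ‖S'‖ ≤ ‖S‖ := hsum ▸ hmax N hNcard
  have hre : (S' * (starRingEnd ℂ) S).re ≤ ‖S'‖ * ‖S‖ := by
    calc (S' * (starRingEnd ℂ) S).re ≤ norm (S' * (starRingEnd ℂ) S) :=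
          Complex.re_le_norm _
      _ = ‖S'‖ * ‖S‖ := by rw [norm_mul, Complex.norm_conj]
  have hSS : (S * (starRingEnd ℂ) S).re = ‖S‖ ^ 2 := by
    rw [Complex.mul_conj]
    simp [Complex.sq_norm]
  have hsplit : (S' * (starRingEnd ℂ) S).re
      = (S * (starRingEnd ℂ) S).re + (e c m * (starRingEnd ℂ) S).re
        - (e c m' * (starRingEnd ℂ) S).re := by
    have : S' * (starRingEnd ℂ) S
        = S * (starRingEnd ℂ) S + e c m * (starRingEnd ℂ) S - e c m' * (starRingEnd ℂ) S := by
      rw [hS']; ring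
    rw [this, Complex.sub_re, Complex.add_re]
  have habsS : 0 < ‖S‖ := norm_pos_iff.2 hS
  by_contra hcon
  push_neg at hcon
  -- hcon : re (e m' * conj S) ≤ re (e m * conj S)
  have h2 : ‖S‖ ^ 2 ≤ (S' * (starRingEnd ℂ) S).re := by
    rw [hsplit, hSS]; linarith
  have h3 : ‖S'‖ = ‖S‖ := by
    nlinarith [hre, h1, habsS]
  have h4 : (S' * (starRingEnd ℂ) S).re = ‖S‖ ^ 2 := by
    nlinarith [hre]
  -- deduce S' = S
  set z := S' * (starRingEnd ℂ) S with hz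
  have habsz : ‖z‖ = ‖S‖ ^ 2 := by
    rw [hz, norm_mul, Complex.norm_conj, h3, sq]
  have him : z.im = 0 := by
    have := Complex.sq_norm z
    rw [Complex.normSq_apply, habsz, ← h4] at this
    nlinarith [this]
  have hzeq : z = ((‖S‖ ^ 2 : ℝ) : ℂ) := by
    apply Complex.ext
    · rw [h4, Complex.ofReal_re]
    · rw [him, Complex.ofReal_im]
  have hzS : z = S * (starRingEnd ℂ) S := by
    rw [hzeq, Complex.mul_conj]
    norm_cast
    exact Complex.sq_norm S
  have hconjS : (starRingEnd ℂ) S ≠ 0 := by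
    simpa using hS
  have hS'S : S' = S := mul_right_cancel₀ hconjS (hz ▸ hzS)
  have hee : e c m = e c m' := by
    have := hS'S
    rw [hS'] at this
    linear_combination this
  have : m = m' := e_injective c hc hee
  exact hm (this ▸ hm')

lemma arc_card (c d : ℕ) (hdc : d ≤ c) :
    ((Finset.range d).image (Nat.cast : ℕ → ZMod c)).card = d := by
  rw [Finset.card_image_of_injOn, Finset.card_range]
  intro x hx y hy hxy
  simp only [Finset.coe_range, Set.mem_Iio] at hx hy
  have := congrArg ZMod.val hxy
  rwa [ZMod.val_cast_of_lt (lt_of_lt_of_le hx hdc),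
    ZMod.val_cast_of_lt (lt_of_lt_of_le hy hdc)] at this

/-- main structural lemma: a maximizer is an arc -/
lemma arc_of_max {c d : ℕ} (hd : 0 < d) (hdc : d < c)
    {M : Finset (ZMod c)} (hM : M.card = d)
    (hmax : ∀ N : Finset (ZMod c), N.card = d →
      norm (∑ x ∈ N, e c x) ≤ norm (∑ x ∈ M, e c x)) :
    ∃ a : ℤ, M = (Finset.Icc 1 d).image (fun k : ℕ => ((a : ZMod c) + (k : ZMod c))) := by
  have hc : 0 < c := hd.trans hdc
  haveI : NeZero c := ⟨hc.ne'⟩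
  have hcR : (0:ℝ) < c := by exact_mod_cast hc
  have hπ : (0:ℝ) < Real.pi := Real.pi_pos
  set S := ∑ x ∈ M, e c x with hSdef
  have habsS : 0 < ‖S‖ := by
    have h0 := arc_sum_pos c d hd hdc
    have := hmax _ (arc_card c d hdc.le)
    linarith
  have hS : S ≠ 0 := fun h => by rw [h] at habsS; simp at habsS
  set φ := Complex.arg ((starRingEnd ℂ) S) with hφ
  set p : ℝ := φ * c / (2 * Real.pi) with hp
  -- real part formula
  have hre : ∀ m : ZMod c, (e c m * (starRingEnd ℂ) S).re
      = ‖S‖ * Real.cos (2 * Real.pi * (((m.val:ℝ)) - p) / c) := by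
    intro m
    have hconj : (starRingEnd ℂ) S
        = (‖S‖ : ℂ) * Complex.exp ((φ:ℂ) * I) := by
      rw [hφ]
      have := Complex.norm_mul_exp_arg_mul_I ((starRingEnd ℂ) S)
      rw [Complex.norm_conj] at this
      exact this.symm
    rw [e_exp, hconj]
    have hmul : Complex.exp (((-(2 * Real.pi * (m.val : ℝ) / c) : ℝ) : ℂ) * I)
        * ((‖S‖ : ℂ) * Complex.exp ((φ:ℂ) * I))
        = (‖S‖ : ℂ)
          * Complex.exp (((-(2 * Real.pi * (m.val : ℝ) / c) + φ : ℝ) : ℂ) * I) := by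
      have h9 : (((-(2 * Real.pi * (m.val : ℝ) / c) + φ : ℝ) : ℂ) * I)
          = ((-(2 * Real.pi * (m.val : ℝ) / c) : ℝ) : ℂ) * I + (φ:ℂ) * I := by
        push_cast
        ring
      rw [h9, Complex.exp_add]
      ring
    rw [hmul, Complex.re_ofReal_mul, Complex.exp_ofReal_mul_I_re]
    congr 1
    have harg : -(2 * Real.pi * (m.val : ℝ) / c) + φ
        = -(2 * Real.pi * (((m.val:ℝ)) - p) / c) := by
      rw [hp]
      field_simp
      ring
    rw [harg, Real.cos_neg]
  -- circular distance
  set δ : ZMod c → ℝ := fun m => |toIocMod hcR (-(c/2)) ((m.val:ℝ) - p)| with hδdef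
  have hδ0 : ∀ m, 0 ≤ δ m := fun m => abs_nonneg _
  have hδle : ∀ m, δ m ≤ c/2 := by
    intro m
    have h := toIocMod_mem_Ioc hcR (-(c/2)) ((m.val:ℝ) - p)
    rw [Set.mem_Ioc] at h
    rw [hδdef]
    dsimp only
    rw [abs_le]
    constructor
    · linarith [h.1]
    · linarith [h.2]
  have hcos : ∀ m, Real.cos (2*Real.pi*(((m.val:ℝ)) - p)/c) = Real.cos (2*Real.pi*(δ m)/c) := by
    intro m
    set r := toIocMod hcR (-(c/2)) ((m.val:ℝ) - p) with hr
    set z := toIocDiv hcR (-(c/2)) ((m.val:ℝ) - p) with hz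
    have hsplit : (m.val:ℝ) - p = r + (z:ℝ) * c := by
      have := toIocMod_add_toIocDiv_zsmul hcR (-(c/2)) ((m.val:ℝ) - p)
      rw [zsmul_eq_mul] at this
      linarith
    rw [hsplit]
    have harg2 : 2*Real.pi*((r + (z:ℝ)*c))/c = 2*Real.pi*r/c + (z:ℝ)*(2*Real.pi) := by
      field_simp
    rw [harg2, Real.cos_add_int_mul_two_pi]
    have : δ m = |r| := by rw [hδdef]
    rw [this]
    rcases abs_choice r with h | h
    · rw [h]
    · rw [h]
      rw [show 2*Real.pi*(-r)/c = -(2*Real.pi*r/c) by ring, Real.cos_neg]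
  have hcosle : ∀ m m' : ZMod c, δ m ≤ δ m' →
      Real.cos (2*Real.pi*(δ m')/c) ≤ Real.cos (2*Real.pi*(δ m)/c) := by
    intro m m' hle
    apply Real.cos_le_cos_of_nonneg_of_le_pi
    · have := hδ0 m
      positivity
    · rw [div_le_iff₀ hcR]
      nlinarith [hδle m']
    · rw [div_le_div_iff₀ hcR hcR]
      nlinarith [mul_nonneg (mul_nonneg (by positivity : (0:ℝ) ≤ 2*Real.pi)
        (sub_nonneg.2 hle)) hcR.le]
  -- strict separation of distances
  have hδlt : ∀ m' ∈ M, ∀ m ∉ M, δ m' < δ m := by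
    intro m' hm' m hm
    by_contra hle
    push_neg at hle
    have h1 := exchange hc hd hM hmax hS hm hm'
    rw [hre m, hre m', hcos m, hcos m'] at h1
    have h2 := hcosle m m' hle
    nlinarith
  -- threshold
  have hcompl : (Mᶜ : Finset (ZMod c)).Nonempty := by
    rw [← Finset.card_pos, Finset.card_compl, hM]
    have : Fintype.card (ZMod c) = c := ZMod.card c
    omega
  obtain ⟨m₀, hm₀, hm₀min⟩ := Finset.exists_min_image Mᶜ δ hcompl
  set τ := δ m₀ with hτ
  have hm₀M : m₀ ∉ M := Finset.mem_compl.1 hm₀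
  have hiff : ∀ m : ZMod c, m ∈ M ↔ δ m < τ := by
    intro m
    constructor
    · intro hmM; exact hδlt m hmM m₀ hm₀M
    · intro hlt
      by_contra hmM
      exact absurd hlt (not_lt.2 (hm₀min m (Finset.mem_compl.2 hmM)))
  have hτc : τ ≤ c/2 := hδle m₀
  -- integer characterization
  have hchar : ∀ m : ZMod c, δ m < τ ↔
      ∃ n : ℤ, ((n : ZMod c) = m ∧ p - τ < (n:ℝ) ∧ (n:ℝ) < p + τ) := by
    intro m
    constructor
    · intro hlt
      set r := toIocMod hcR (-(c/2)) ((m.val:ℝ) - p) with hr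
      set z := toIocDiv hcR (-(c/2)) ((m.val:ℝ) - p) with hz
      have hsplit : (m.val:ℝ) - p = r + (z:ℝ) * c := by
        have := toIocMod_add_toIocDiv_zsmul hcR (-(c/2)) ((m.val:ℝ) - p)
        rw [zsmul_eq_mul] at this
        linarith
      refine ⟨(m.val : ℤ) - z * c, ?_, ?_, ?_⟩
      · push_cast
        haveI : NeZero c := ⟨hc.ne'⟩
        rw [ZMod.natCast_self]
        rw [ZMod.natCast_rightInverse m]
        ring
      · have habs : |r| < τ := hlt
        rw [abs_lt] at habs
        push_cast
        nlinarith [habs.1]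
      · have habs : |r| < τ := hlt
        rw [abs_lt] at habs
        push_cast
        nlinarith [habs.2]
    · rintro ⟨n, hcast, hlo, hhi⟩
      have hdvd : (c:ℤ) ∣ (n - (m.val:ℤ)) := by
        rw [← ZMod.intCast_zmod_eq_zero_iff_dvd]
        push_cast
        haveI : NeZero c := ⟨hc.ne'⟩
        rw [hcast, ZMod.natCast_rightInverse m]
        ring
      obtain ⟨z, hzz⟩ := hdvd
      have hτ0 : 0 ≤ τ := hδ0 m₀
      have heq : toIocMod hcR (-(c/2)) ((m.val:ℝ) - p) = (n:ℝ) - p := by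
        rw [toIocMod_eq_iff hcR]
        constructor
        · rw [Set.mem_Ioc]
          constructor
          · linarith
          · linarith
        · refine ⟨-z, ?_⟩
          rw [zsmul_eq_mul]
          have : (n:ℝ) - (m.val:ℝ) = c * z := by exact_mod_cast hzz
          push_cast
          linarith
      have : δ m = |(n:ℝ) - p| := by rw [hδdef]; dsimp only; rw [heq]
      rw [this, abs_lt]
      constructor
      · linarith
      · linarith
  set a : ℤ := ⌊p - τ⌋ with ha
  set b : ℤ := ⌈p + τ⌉ with hb
  have hMeq : M = (Finset.Ioo a b).image (fun n : ℤ => (n : ZMod c)) := by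
    ext m
    rw [hiff m, hchar m]
    simp only [Finset.mem_image, Finset.mem_Ioo]
    constructor
    · rintro ⟨n, hcast, hlo, hhi⟩
      exact ⟨n, ⟨Int.floor_lt.2 hlo, Int.lt_ceil.2 hhi⟩, hcast⟩
    · rintro ⟨n, ⟨hlo, hhi⟩, hcast⟩
      exact ⟨n, hcast, Int.floor_lt.1 hlo, Int.lt_ceil.1 hhi⟩
  have hbnd : ∀ n ∈ Finset.Ioo a b, p - τ < (n:ℝ) ∧ (n:ℝ) < p + τ := by
    intro n hn
    rw [Finset.mem_Ioo] at hn
    exact ⟨Int.floor_lt.1 hn.1, Int.lt_ceil.1 hn.2⟩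
  have hinj : Set.InjOn (fun n : ℤ => (n : ZMod c)) (Finset.Ioo a b) := by
    intro x hx y hy hxy
    simp only [Finset.coe_sort_coe, Finset.mem_coe] at hx hy
    obtain ⟨hx1, hx2⟩ := hbnd x hx
    obtain ⟨hy1, hy2⟩ := hbnd y hy
    have hxy' : (x : ZMod c) = (y : ZMod c) := hxy
    have hdvd : (c:ℤ) ∣ (x - y) := by
      rw [← ZMod.intCast_zmod_eq_zero_iff_dvd]
      push_cast
      rw [hxy']
      ring
    have habs : |x - y| < (c:ℤ) := by
      have hr : |(x:ℝ) - y| < c := by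
        rw [abs_lt]
        constructor
        · nlinarith
        · nlinarith
      have : |((x - y : ℤ) : ℝ)| < (c:ℝ) := by push_cast; push_cast at hr; linarith [abs_lt.1 hr] 
      exact_mod_cast this
    have := Int.eq_zero_of_abs_lt_dvd hdvd habs
    omega
  have hcard : (b - a - 1).toNat = d := by
    have h1 : M.card = (Finset.Ioo a b).card := by
      rw [hMeq, Finset.card_image_of_injOn hinj]
    rw [Int.card_Ioo] at h1
    omega
  have hba : b = a + 1 + (d:ℤ) := by omega
  refine ⟨a, ?_⟩
  rw [hMeq, hba]
  ext x
  simp only [Finset.mem_image, Finset.mem_Ioo, Finset.mem_Icc]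
  constructor
  · rintro ⟨n, ⟨h1, h2⟩, rfl⟩
    refine ⟨(n - a).toNat, ⟨by omega, by omega⟩, ?_⟩
    have hnk : ((n - a).toNat : ℤ) = n - a := Int.toNat_of_nonneg (by omega)
    have h3 : (((n - a).toNat : ℕ) : ZMod c) = ((n - a : ℤ) : ZMod c) := by
      exact_mod_cast congrArg (fun z : ℤ => (z : ZMod c)) hnk
    rw [h3]
    push_cast
    ring
  · rintro ⟨k, ⟨hk1, hk2⟩, rfl⟩
    refine ⟨a + (k:ℤ), ⟨by omega, by omega⟩, ?_⟩
    push_cast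
    ring

end MEaux

/-- When `gcd(c,d) = 1`, a maximally even set of cardinality `d` is a generated scale:
up to translation it consists of `{f, 2f, …, d·f}` where `f = d⁻¹ (mod c)`. -/
theorem maximallyEven_is_generated (c d : ℕ) (hc : 0 < c) (hd : 0 < d) (hdc : d ≤ c)
    (hgcd : Nat.gcd c d = 1) (A : Finset (ZMod c)) (hA : MaximallyEven c d A) :
    ∃ t : ZMod c,
      A = (Finset.Icc 1 d).image (fun k : ℕ => t + (k : ZMod c) * (d : ZMod c)⁻¹) := by
  obtain ⟨hcard, hmax⟩ := hA
  by_cases hc1 : c = 1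
  · subst hc1
    have hd1 : d = 1 := le_antisymm hdc hd
    subst hd1
    have hAuniv : A = Finset.univ := Finset.eq_univ_of_card A (by rw [hcard]; rfl)
    refine ⟨0, ?_⟩
    rw [hAuniv]
    ext x
    simp only [Finset.mem_univ, true_iff, Finset.mem_image]
    exact ⟨1, by norm_num, Subsingleton.elim _ _⟩
  · have hc2 : 2 ≤ c := by omega
    have hdlt : d < c := by
      rcases lt_or_eq_of_le hdc with h | h
      · exact h
      · exfalso; rw [h, Nat.gcd_self] at hgcd; omega
    haveI : NeZero c := ⟨by omega⟩
    have hcop : Nat.Coprime d c := Nat.coprime_comm.mp hgcd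
    have hunit : (d : ZMod c) * (d : ZMod c)⁻¹ = 1 := ZMod.coe_mul_inv_eq_one d hcop
    have hinv2 : (d : ZMod c)⁻¹ * (d : ZMod c) = 1 := by rw [mul_comm]; exact hunit
    have minj : Function.Injective (fun x : ZMod c => x * (d : ZMod c)) := by
      intro x y h
      have := congrArg (· * (d : ZMod c)⁻¹) h
      simpa [mul_assoc, hunit] using this
    have minj' : Function.Injective (fun x : ZMod c => x * (d : ZMod c)⁻¹) := by
      intro x y h
      have := congrArg (· * (d : ZMod c)) h
      simpa [mul_assoc, hinv2] using this
    set M := A.image (fun x : ZMod c => x * (d : ZMod c)) with hMdef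
    have hMcard : M.card = d := by
      rw [hMdef, Finset.card_image_of_injective _ minj, hcard]
    have hFA : fourierTransform c A ((d : ℕ) : ZMod c) = ∑ x ∈ M, MEaux.e c x := by
      rw [MEaux.fourier_eq c hc A _ (Function.Injective.injOn minj)]
    have hmax' : ∀ N : Finset (ZMod c), N.card = d →
        norm (∑ x ∈ N, MEaux.e c x) ≤ norm (∑ x ∈ M, MEaux.e c x) := by
      intro N hN
      set B := N.image (fun x : ZMod c => x * (d : ZMod c)⁻¹) with hBdef
      have hBcard : B.card = d := by
        rw [hBdef, Finset.card_image_of_injective _ minj', hN]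
      have hBM : B.image (fun x : ZMod c => x * (d : ZMod c)) = N := by
        rw [hBdef, Finset.image_image]
        have hfun : ((fun x : ZMod c => x * (d : ZMod c)) ∘ (fun x : ZMod c => x * (d : ZMod c)⁻¹)) = id := by
          funext x
          simp [Function.comp, mul_assoc, hinv2]
        rw [hfun, Finset.image_id]
      have hFB : fourierTransform c B ((d : ℕ) : ZMod c) = ∑ x ∈ N, MEaux.e c x := by
        rw [MEaux.fourier_eq c hc B _ (Function.Injective.injOn minj), hBM]
      calc norm (∑ x ∈ N, MEaux.e c x)
          = norm (fourierTransform c B ((d : ℕ) : ZMod c)) := by rw [hFB]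
        _ ≤ norm (fourierTransform c A ((d : ℕ) : ZMod c)) := hmax B hBcard
        _ = norm (∑ x ∈ M, MEaux.e c x) := by rw [hFA]
    obtain ⟨a, hMarc⟩ := MEaux.arc_of_max hd hdlt hMcard hmax'
    have hAM : A = M.image (fun x : ZMod c => x * (d : ZMod c)⁻¹) := by
      rw [hMdef, Finset.image_image]
      have hfun : ((fun x : ZMod c => x * (d : ZMod c)⁻¹) ∘ (fun x : ZMod c => x * (d : ZMod c))) = id := by
        funext x
        simp [Function.comp, mul_assoc, hunit]
      rw [hfun, Finset.image_id]
    refine ⟨(a : ZMod c) * (d : ZMod c)⁻¹, ?_⟩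
    rw [hAM, hMarc, Finset.image_image]
    apply Finset.image_congr
    intro k _
    simp only [Function.comp]
    ring
end

section
/- Let c, d be positive integers with gcd(c,d) = 1 and 2d < c, and let A ⊆ ZMod c be a maximally even set of cardinality d. Then A is contained in a maximally even set of cardinality c - d; more precisely, the number of maximally even sets B ⊆ ZMod c of cardinality c - d with A ⊆ B is exactly c - 2d + 1. -/
namespace MEaux

noncomputable def E (c : ℕ) (n : ℕ) : ℂ :=
  Complex.exp ((-(2 * Real.pi * n / c) : ℝ) * Complex.I)

noncomputable def g (c : ℕ) (j : ZMod c) : ℂ := E c j.val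

noncomputable def G (c : ℕ) (T : Finset (ZMod c)) : ℂ := ∑ j ∈ T, g c j

noncomputable def K (c d : ℕ) : ℂ := ∑ m ∈ Finset.range d, E c m

def Arc (c d : ℕ) (a : ZMod c) : Finset (ZMod c) :=
  (Finset.range d).image (fun m => a + ((m : ℕ) : ZMod c))

lemma E_mod (c : ℕ) (hc : 0 < c) (n : ℕ) : E c n = E c (n % c) := by
  have hc' : (c : ℂ) ≠ 0 := by exact_mod_cast hc.ne'
  obtain ⟨q, r, hr, rfl⟩ : ∃ q r, r = n % c ∧ n = c * q + r :=
    ⟨n / c, n % c, rfl, (Nat.div_add_mod n c).symm⟩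
  have harg : ((-(2 * Real.pi * ((c * q + r : ℕ) : ℝ) / c) : ℝ) : ℂ) * Complex.I
      = ((-(2 * Real.pi * (r : ℝ) / c) : ℝ) : ℂ) * Complex.I
        + ((-(q : ℤ) : ℤ) : ℂ) * (2 * Real.pi * Complex.I) := by
    push_cast
    field_simp
    ring
  rw [E, E, harg, Complex.exp_add, Complex.exp_int_mul_two_pi_mul_I, mul_one, ← hr]

lemma E_eq_g (c : ℕ) (hc : 0 < c) (n : ℕ) : E c n = g c ((n : ℕ) : ZMod c) := by
  simp only [g, ZMod.val_natCast]
  exact E_mod c hc n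

lemma g_add (c : ℕ) (hc : 0 < c) (a b : ZMod c) : g c (a + b) = g c a * g c b := by
  haveI : NeZero c := ⟨hc.ne'⟩
  have h1 : g c a * g c b = E c (a.val + b.val) := by
    simp only [g, E, ← Complex.exp_add]
    congr 1
    push_cast
    ring
  rw [h1, E_eq_g c hc]
  congr 1
  rw [Nat.cast_add, ZMod.natCast_rightInverse a, ZMod.natCast_rightInverse b]

lemma abs_E (c n : ℕ) : ‖E c n‖ = 1 := by
  rw [E, Complex.norm_exp_ofReal_mul_I]

lemma abs_g (c : ℕ) (j : ZMod c) : ‖g c j‖ = 1 := abs_E c j.val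

lemma FT_eq (c : ℕ) (hc : 0 < c) (S : Finset (ZMod c)) (t : ZMod c) :
    fourierTransform c S t = ∑ k ∈ S, g c (k * t) := by
  have hc' : (c : ℂ) ≠ 0 := by exact_mod_cast hc.ne'
  unfold fourierTransform
  refine Finset.sum_congr rfl fun k _ => ?_
  have harg : -2 * (Real.pi : ℂ) * Complex.I * ((k.val : ℂ) * (t.val : ℂ)) / c
      = ((-(2 * Real.pi * ((k.val * t.val : ℕ) : ℝ) / c) : ℝ) : ℂ) * Complex.I := by
    push_cast
    field_simp
  rw [harg]
  show E c (k.val * t.val) = g c (k * t)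
  rw [E_mod c hc]
  simp only [g, ZMod.val_mul]

end MEaux

namespace MEaux
section
variable {c d : ℕ}

lemma natCast_inj_lt (hc : 0 < c) {m m' : ℕ} (hm : m < c) (hm' : m' < c)
    (h : ((m : ℕ) : ZMod c) = (m' : ZMod c)) : m = m' := by
  have := congrArg ZMod.val h
  rwa [ZMod.val_cast_of_lt hm, ZMod.val_cast_of_lt hm'] at this

lemma card_Arc (hc : 0 < c) (hdc : d ≤ c) (a : ZMod c) : (Arc c d a).card = d := by
  rw [Arc, Finset.card_image_of_injOn, Finset.card_range]
  intro m hm m' hm' h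
  simp only [Finset.mem_coe, Finset.mem_range] at hm hm'
  exact natCast_inj_lt hc (lt_of_lt_of_le hm hdc) (lt_of_lt_of_le hm' hdc)
    (add_left_cancel h)

lemma mem_Arc_iff (hc : 0 < c) (hdc : d ≤ c) (a j : ZMod c) :
    j ∈ Arc c d a ↔ (j - a).val < d := by
  haveI : NeZero c := ⟨hc.ne'⟩
  constructor
  · rintro hj
    rw [Arc, Finset.mem_image] at hj
    obtain ⟨m, hm, rfl⟩ := hj
    rw [Finset.mem_range] at hm
    rw [add_sub_cancel_left, ZMod.val_cast_of_lt (lt_of_lt_of_le hm hdc)]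
    exact hm
  · intro hj
    rw [Arc, Finset.mem_image]
    exact ⟨(j - a).val, Finset.mem_range.2 hj, by
      rw [ZMod.natCast_rightInverse (j - a)]; ring⟩

lemma G_Arc (hc : 0 < c) (hdc : d ≤ c) (a : ZMod c) :
    G c (Arc c d a) = g c a * K c d := by
  rw [G, Arc, Finset.sum_image, K, Finset.mul_sum]
  · refine Finset.sum_congr rfl fun m hm => ?_
    rw [Finset.mem_range] at hm
    rw [g_add c hc, E_eq_g c hc m]
  · intro m hm m' hm' h
    simp only [Finset.mem_coe, Finset.mem_range] at hm hm'
    exact natCast_inj_lt hc (lt_of_lt_of_le hm hdc) (lt_of_lt_of_le hm' hdc)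
      (add_left_cancel h)

lemma abs_G_Arc (hc : 0 < c) (hdc : d ≤ c) (a : ZMod c) :
    ‖G c (Arc c d a)‖ = ‖K c d‖ := by
  rw [G_Arc hc hdc, norm_mul, abs_g, one_mul]

/-- the real number `sin(πd/c)/sin(π/c)`, expressed as a cosine sum. -/
noncomputable def R (c d : ℕ) : ℝ :=
  ∑ m ∈ Finset.range d, Real.cos ((2 * (m : ℝ) - ((d : ℝ) - 1)) * Real.pi / c)

lemma pi_window {cR A : ℝ} (hc : 0 < cR) (h1 : -cR/2 < A) (h2 : A < cR/2) :
    A * Real.pi / cR ∈ Set.Ioo (-(Real.pi/2)) (Real.pi/2) := by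
  constructor
  · rw [lt_div_iff₀ hc]
    nlinarith [Real.pi_pos, mul_pos (by linarith : (0:ℝ) < A + cR/2) Real.pi_pos]
  · rw [div_lt_iff₀ hc]
    nlinarith [Real.pi_pos, mul_pos (by linarith : (0:ℝ) < cR/2 - A) Real.pi_pos]

lemma R_pos (hd : 0 < d) (h2d : 2 * d < c) : 0 < R c d := by
  have hc0 : 0 < c := by omega
  have hc : (0:ℝ) < c := by exact_mod_cast hc0
  refine Finset.sum_pos (fun m hm => ?_) ⟨0, Finset.mem_range.2 hd⟩
  rw [Finset.mem_range] at hm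
  have hm0 : (0:ℝ) ≤ m := by positivity
  have h2 : 2*(d:ℝ) < c := by exact_mod_cast h2d
  have hd1 : (1:ℝ) ≤ d := by exact_mod_cast hd
  have hmd : (m:ℝ) ≤ (d:ℝ) - 1 := by
    have : (m:ℝ) + 1 ≤ d := by exact_mod_cast hm
    linarith
  refine Real.cos_pos_of_mem_Ioo (pi_window hc ?_ ?_)
  · linarith
  · linarith

lemma sum_sin_zero (c d : ℕ) :
    ∑ m ∈ Finset.range d, Real.sin ((2 * (m:ℝ) - ((d:ℝ)-1)) * Real.pi / c) = 0 := by
  set f : ℕ → ℝ := fun m => Real.sin ((2 * (m:ℝ) - ((d:ℝ)-1)) * Real.pi / c) with hf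
  have h := Finset.sum_range_reflect f d
  have h2 : ∀ m ∈ Finset.range d, f (d - 1 - m) = - f m := by
    intro m hm
    rw [Finset.mem_range] at hm
    have hcast : ((d - 1 - m : ℕ) : ℝ) = (d:ℝ) - 1 - m := by
      have h3 : d - 1 - m + m + 1 = d := by omega
      have := congrArg (Nat.cast (R := ℝ)) h3
      push_cast at this
      linarith
    simp only [hf, hcast]
    rw [← Real.sin_neg]
    ring_nf
  rw [Finset.sum_congr rfl h2, Finset.sum_neg_distrib] at h
  linarith

lemma K_polar (hc : 0 < c) :
    Complex.exp (((((d : ℝ) - 1) * Real.pi / c : ℝ) : ℂ) * Complex.I) * K c d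
      = (R c d : ℂ) := by
  have hpt : ∀ m ∈ Finset.range d,
      Complex.exp (((((d : ℝ) - 1) * Real.pi / c : ℝ) : ℂ) * Complex.I) * E c m
        = ((Real.cos ((2 * (m:ℝ) - ((d:ℝ)-1)) * Real.pi / c) : ℝ) : ℂ)
          - ((Real.sin ((2 * (m:ℝ) - ((d:ℝ)-1)) * Real.pi / c) : ℝ) : ℂ) * Complex.I := by
    intro m _
    rw [E, ← Complex.exp_add]
    have harg : ((((d : ℝ) - 1) * Real.pi / c : ℝ) : ℂ) * Complex.I
        + ((-(2 * Real.pi * m / c) : ℝ) : ℂ) * Complex.I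
        = ((-((2 * (m:ℝ) - ((d:ℝ)-1)) * Real.pi / c) : ℝ) : ℂ) * Complex.I := by
      push_cast
      ring
    rw [harg, Complex.exp_mul_I, ← Complex.ofReal_cos, ← Complex.ofReal_sin,
      Real.cos_neg, Real.sin_neg]
    push_cast
    ring
  rw [K, Finset.mul_sum, Finset.sum_congr rfl hpt, Finset.sum_sub_distrib, R]
  rw [← Finset.sum_mul, ← Complex.ofReal_sum, ← Complex.ofReal_sum, sum_sin_zero]
  push_cast
  ring


lemma abs_K (hd : 0 < d) (h2d : 2 * d < c) : ‖K c d‖ = R c d := by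
  have h := congrArg norm (K_polar (c := c) (d := d) (by omega))
  rwa [norm_mul, Complex.norm_exp_ofReal_mul_I, one_mul, Complex.norm_real, Real.norm_eq_abs,
    abs_of_pos (R_pos hd h2d)] at h

lemma sum_le_sum_pairwise {α : Type*} [DecidableEq α] {S T : Finset α} (hcard : S.card = T.card)
    {f : α → ℝ} (h : ∀ k ∈ S \ T, ∀ j ∈ T \ S, f k ≤ f j) :
    ∑ x ∈ S, f x ≤ ∑ x ∈ T, f x := by
  have hST : (S \ T).card = (T \ S).card := Finset.card_sdiff_comm hcard
  rcases Finset.eq_empty_or_nonempty (T \ S) with hempty | hne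
  · have hTS : T ⊆ S := Finset.sdiff_eq_empty_iff_subset.mp hempty
    rw [Finset.eq_of_subset_of_card_le hTS (le_of_eq hcard)]
  · obtain ⟨j₀, hj₀, hmin⟩ := Finset.exists_min_image (T \ S) f hne
    have h1 : ∑ x ∈ S \ T, f x ≤ (S \ T).card • f j₀ :=
      Finset.sum_le_card_nsmul _ _ _ (fun k hk => h k hk j₀ hj₀)
    have h2 : (T \ S).card • f j₀ ≤ ∑ x ∈ T \ S, f x :=
      Finset.card_nsmul_le_sum _ _ _ (fun j hj => hmin j hj)
    have e1 : ∑ x ∈ S ∩ T, f x + ∑ x ∈ S \ T, f x = ∑ x ∈ S, f x :=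
      Finset.sum_inter_add_sum_sdiff S T f
    have e2 : ∑ x ∈ T ∩ S, f x + ∑ x ∈ T \ S, f x = ∑ x ∈ T, f x :=
      Finset.sum_inter_add_sum_sdiff T S f
    rw [Finset.inter_comm] at e2
    rw [hST] at h1
    linarith

lemma eq_of_sum_eq_pairwise {α : Type*} [DecidableEq α] {S T : Finset α} (hcard : S.card = T.card)
    {f : α → ℝ} (h : ∀ k ∈ S \ T, ∀ j ∈ T \ S, f k < f j)
    (hsum : ∑ x ∈ S, f x = ∑ x ∈ T, f x) : S = T := by
  have hST : (S \ T).card = (T \ S).card := Finset.card_sdiff_comm hcard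
  rcases Finset.eq_empty_or_nonempty (T \ S) with hempty | hne
  · have hTS : T ⊆ S := Finset.sdiff_eq_empty_iff_subset.mp hempty
    exact (Finset.eq_of_subset_of_card_le hTS (le_of_eq hcard)).symm
  · exfalso
    obtain ⟨j₀, hj₀, hmin⟩ := Finset.exists_min_image (T \ S) f hne
    have hSTne : (S \ T).Nonempty := by
      rw [← Finset.card_pos, hST, Finset.card_pos]; exact hne
    have h1 : ∑ x ∈ S \ T, f x < ∑ _x ∈ S \ T, f j₀ :=
      Finset.sum_lt_sum_of_nonempty hSTne (fun k hk => h k hk j₀ hj₀)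
    rw [Finset.sum_const] at h1
    have h2 : (T \ S).card • f j₀ ≤ ∑ x ∈ T \ S, f x :=
      Finset.card_nsmul_le_sum _ _ _ (fun j hj => hmin j hj)
    have e1 : ∑ x ∈ S ∩ T, f x + ∑ x ∈ S \ T, f x = ∑ x ∈ S, f x :=
      Finset.sum_inter_add_sum_sdiff S T f
    have e2 : ∑ x ∈ T ∩ S, f x + ∑ x ∈ T \ S, f x = ∑ x ∈ T, f x :=
      Finset.sum_inter_add_sum_sdiff T S f
    rw [Finset.inter_comm] at e2
    rw [hST] at h1
    linarith

lemma cos_window {D u v : ℝ} (hD : D ≤ Real.pi) (hu0 : 0 ≤ u) (hu : u ≤ D)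
    (hv1 : D ≤ v) (hv2 : v ≤ 2 * Real.pi - D) : Real.cos v ≤ Real.cos u := by
  have hD0 : 0 ≤ D := le_trans hu0 hu
  have h1 : Real.cos v ≤ Real.cos D := by
    rcases le_or_gt v Real.pi with hvp | hvp
    · exact Real.cos_le_cos_of_nonneg_of_le_pi hD0 hvp hv1
    · rw [← Real.cos_two_pi_sub]
      exact Real.cos_le_cos_of_nonneg_of_le_pi hD0 (by linarith) (by linarith)
  have h2 : Real.cos D ≤ Real.cos u := Real.cos_le_cos_of_nonneg_of_le_pi hu0 hD hu
  linarith

lemma cos_window_strict {D1 D2 u v : ℝ} (hD2 : D2 ≤ Real.pi) (hD12 : D1 < D2) (hD10 : 0 ≤ D1)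
    (hu0 : 0 ≤ u) (hu : u ≤ D1) (hv1 : D2 ≤ v) (hv2 : v ≤ 2 * Real.pi - D2) :
    Real.cos v < Real.cos u := by
  have h1 : Real.cos v ≤ Real.cos D2 := cos_window hD2 (by linarith) le_rfl hv1 hv2
  have h2 : Real.cos D2 < Real.cos D1 := by
    apply Real.strictAntiOn_cos ⟨hD10, by linarith⟩ ⟨by linarith, hD2⟩ hD12
  have h3 : Real.cos D1 ≤ Real.cos u := Real.cos_le_cos_of_nonneg_of_le_pi hu0 (by linarith) hu
  linarith

lemma f_shift (hc : 0 < c) (θ : ℝ) (b : ℤ) (j : ZMod c) :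
    Real.cos (θ + 2 * Real.pi * (j.val : ℝ) / c)
      = Real.cos (θ + 2 * Real.pi * ((b : ℝ) + (((j - (b : ZMod c)).val : ℕ) : ℝ)) / c) := by
  haveI : NeZero c := ⟨hc.ne'⟩
  set m : ℕ := (j - (b : ZMod c)).val with hm
  have hcast : (((j.val : ℕ) : ℤ) : ZMod c) = ((b + (m : ℤ) : ℤ) : ZMod c) := by
    push_cast
    rw [ZMod.natCast_rightInverse j, ZMod.natCast_rightInverse (j - (b : ZMod c))]
    ring
  have hdvd : ((j.val : ℤ)) ≡ (b + (m : ℤ)) [ZMOD (c : ℤ)] :=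
    (ZMod.intCast_eq_intCast_iff _ _ _).mp hcast
  obtain ⟨q, hq⟩ := hdvd.dvd
  have hq' : ((j.val : ℕ) : ℤ) = b + (m : ℤ) - c * q := by omega
  have hr : ((j.val : ℕ) : ℝ) = (b : ℝ) + (m : ℝ) - (c : ℝ) * (q : ℝ) := by
    exact_mod_cast congrArg (fun z : ℤ => (z : ℝ)) hq'
  have hcR : ((c : ℝ)) ≠ 0 := by positivity
  rw [show θ + 2 * Real.pi * ((j.val : ℕ) : ℝ) / c
      = (θ + 2 * Real.pi * ((b : ℝ) + ((m : ℕ) : ℝ)) / c) + (-q : ℤ) * (2 * Real.pi) by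
    rw [hr]; push_cast; field_simp; ring]
  rw [Real.cos_add_int_mul_two_pi]


lemma cos_compare {cR dR x y : ℝ} (hc : 0 < cR) (hd0 : 0 ≤ dR) (hdc : dR ≤ cR)
    (hx : |x| ≤ dR/2) (hy1 : dR/2 ≤ y) (hy2 : y ≤ cR - dR/2) :
    Real.cos (2*Real.pi*y/cR) ≤ Real.cos (2*Real.pi*x/cR) := by
  have hπ := Real.pi_pos
  rw [← Real.cos_abs (2*Real.pi*x/cR)]
  have habs : |2*Real.pi*x/cR| = 2*Real.pi*|x|/cR := by
    rw [abs_div, abs_of_pos hc, abs_mul, abs_of_pos (by linarith : (0:ℝ) < 2*Real.pi)]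
  rw [habs]
  apply cos_window (D := Real.pi * dR / cR)
  · rw [div_le_iff₀ hc]; nlinarith
  · positivity
  · rw [div_le_div_iff₀ hc hc]
    nlinarith [mul_le_mul_of_nonneg_right hx (mul_pos hπ hc).le]
  · rw [div_le_div_iff₀ hc hc]
    nlinarith [mul_le_mul_of_nonneg_right hy1 (mul_pos hπ hc).le]
  · rw [show 2*Real.pi - Real.pi*dR/cR = (2*Real.pi*cR - Real.pi*dR)/cR by field_simp,
      div_le_div_iff₀ hc hc]
    nlinarith [mul_le_mul_of_nonneg_right hy2 (mul_pos hπ hc).le]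

lemma cos_compare_strict {cR d1 d2 x y : ℝ} (hc : 0 < cR) (h10 : 0 ≤ d1) (h12 : d1 < d2)
    (h2c : d2 ≤ cR) (hx : |x| ≤ d1/2) (hy1 : d2/2 ≤ y) (hy2 : y ≤ cR - d2/2) :
    Real.cos (2*Real.pi*y/cR) < Real.cos (2*Real.pi*x/cR) := by
  have hπ := Real.pi_pos
  rw [← Real.cos_abs (2*Real.pi*x/cR)]
  have habs : |2*Real.pi*x/cR| = 2*Real.pi*|x|/cR := by
    rw [abs_div, abs_of_pos hc, abs_mul, abs_of_pos (by linarith : (0:ℝ) < 2*Real.pi)]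
  rw [habs]
  apply cos_window_strict (D1 := Real.pi * d1 / cR) (D2 := Real.pi * d2 / cR)
  · rw [div_le_iff₀ hc]; nlinarith
  · rw [div_lt_div_iff₀ hc hc]
    nlinarith [mul_lt_mul_of_pos_right (mul_lt_mul_of_pos_left h12 hπ) hc]
  · positivity
  · positivity
  · rw [div_le_div_iff₀ hc hc]
    nlinarith [mul_le_mul_of_nonneg_right hx (mul_pos hπ hc).le]
  · rw [div_le_div_iff₀ hc hc]
    nlinarith [mul_le_mul_of_nonneg_right hy1 (mul_pos hπ hc).le]
  · rw [show 2*Real.pi - Real.pi*d2/cR = (2*Real.pi*cR - Real.pi*d2)/cR by field_simp,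
      div_le_div_iff₀ hc hc]
    nlinarith [mul_le_mul_of_nonneg_right hy2 (mul_pos hπ hc).le]

lemma L1core (hc : 0 < c) (hd : 0 < d) (hdc : d ≤ c) (θ : ℝ) :
    ∃ a : ZMod c, ∀ j ∈ Arc c d a, ∀ k, k ∉ Arc c d a →
      Real.cos (θ + 2*Real.pi*(k.val : ℝ)/c) ≤ Real.cos (θ + 2*Real.pi*(j.val : ℝ)/c) := by
  haveI : NeZero c := ⟨hc.ne'⟩
  have hcR : (0:ℝ) < c := by exact_mod_cast hc
  have hπ := Real.pi_pos
  set s : ℝ := -(θ * c) / (2*Real.pi) with hs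
  set a0 : ℤ := ⌊s - ((d:ℝ)-1)/2 + 1/2⌋ with ha0
  have hfl1 : (a0:ℝ) ≤ s - ((d:ℝ)-1)/2 + 1/2 := Int.floor_le _
  have hfl2 : s - ((d:ℝ)-1)/2 + 1/2 < a0 + 1 := Int.lt_floor_add_one _
  refine ⟨(a0 : ZMod c), fun j hj k hk => ?_⟩
  rw [f_shift hc θ a0 j, f_shift hc θ a0 k]
  set mj := (j - (a0 : ZMod c)).val with hmjdef
  set mk := (k - (a0 : ZMod c)).val with hmkdef
  have hmj : mj < d := (mem_Arc_iff hc hdc _ j).mp hj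
  have hmk1 : d ≤ mk := le_of_not_gt (fun hlt => hk ((mem_Arc_iff hc hdc _ k).mpr hlt))
  have hmk2 : mk < c := ZMod.val_lt _
  have hkey : ∀ m : ℕ, θ + 2*Real.pi*((a0 : ℝ) + (m:ℝ))/c
      = 2*Real.pi*(((a0:ℝ) + (m:ℝ)) - s)/c := by
    intro m
    rw [hs]
    field_simp
    ring
  rw [hkey mj, hkey mk]
  have hmjR : (mj : ℝ) ≤ (d:ℝ) - 1 := by
    have : (mj:ℝ) + 1 ≤ d := by exact_mod_cast hmj
    linarith
  have hmj0 : (0:ℝ) ≤ (mj:ℝ) := by positivity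
  have hmkR1 : (d:ℝ) ≤ (mk:ℝ) := by exact_mod_cast hmk1
  have hmkR2 : (mk:ℝ) ≤ (c:ℝ) - 1 := by
    have : (mk:ℝ) + 1 ≤ c := by exact_mod_cast hmk2
    linarith
  apply cos_compare hcR (by positivity : (0:ℝ) ≤ (d:ℝ)) (by exact_mod_cast hdc)
  · rw [abs_le]
    constructor <;> linarith
  · linarith
  · linarith


lemma re_g (c : ℕ) (θ : ℝ) (j : ZMod c) :
    (Complex.exp (((-θ : ℝ) : ℂ) * Complex.I) * g c j).re
      = Real.cos (θ + 2*Real.pi*(j.val : ℝ)/c) := by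
  rw [g, E, ← Complex.exp_add,
    show ((-θ : ℝ) : ℂ) * Complex.I + ((-(2*Real.pi*((j.val : ℕ) : ℝ)/c) : ℝ) : ℂ) * Complex.I
      = ((-(θ + 2*Real.pi*((j.val : ℕ) : ℝ)/c) : ℝ) : ℂ) * Complex.I by push_cast; ring,
    Complex.exp_ofReal_mul_I_re, Real.cos_neg]

lemma exp_neg_arg_mul (v : ℂ) :
    Complex.exp (((-(v.arg) : ℝ) : ℂ) * Complex.I) * v = ((‖v‖ : ℝ) : ℂ) := by
  nth_rewrite 2 [← Complex.norm_mul_exp_arg_mul_I v]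
  rw [mul_comm (((‖v‖ : ℝ) : ℂ)) _, ← mul_assoc, ← Complex.exp_add,
    show ((-(v.arg) : ℝ) : ℂ) * Complex.I + (v.arg : ℂ) * Complex.I = 0 by push_cast; ring,
    Complex.exp_zero, one_mul]

lemma re_sum_eq (c : ℕ) (θ : ℝ) (T : Finset (ZMod c)) :
    (Complex.exp (((-θ : ℝ) : ℂ) * Complex.I) * G c T).re
      = ∑ j ∈ T, Real.cos (θ + 2*Real.pi*(j.val : ℝ)/c) := by
  rw [G, Finset.mul_sum, Complex.re_sum]
  exact Finset.sum_congr rfl fun j _ => re_g c θ j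

lemma sum_f_le_abs (c : ℕ) (θ : ℝ) (T : Finset (ZMod c)) :
    ∑ j ∈ T, Real.cos (θ + 2*Real.pi*(j.val : ℝ)/c) ≤ ‖G c T‖ := by
  rw [← re_sum_eq]
  refine le_trans (Complex.re_le_norm _) (le_of_eq ?_)
  rw [norm_mul, Complex.norm_exp_ofReal_mul_I, one_mul]

lemma abs_G_le (hd : 0 < d) (h2d : 2*d < c) {S : Finset (ZMod c)} (hS : S.card = d) :
    ‖G c S‖ ≤ R c d := by
  have hc : 0 < c := by omega
  have hdc : d ≤ c := by omega
  set θ : ℝ := (G c S).arg with hθ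
  have habs : ‖G c S‖ = ∑ j ∈ S, Real.cos (θ + 2*Real.pi*(j.val : ℝ)/c) := by
    rw [← re_sum_eq, exp_neg_arg_mul, Complex.ofReal_re]
  obtain ⟨a, ha⟩ := L1core hc hd hdc θ
  have hle : ∑ j ∈ S, Real.cos (θ + 2*Real.pi*(j.val : ℝ)/c)
      ≤ ∑ j ∈ Arc c d a, Real.cos (θ + 2*Real.pi*(j.val : ℝ)/c) := by
    refine sum_le_sum_pairwise (hS.trans (card_Arc hc hdc a).symm) (fun k hk j hj => ?_)
    rw [Finset.mem_sdiff] at hk hj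
    exact ha j hj.1 k hk.2
  calc ‖G c S‖ ≤ ∑ j ∈ Arc c d a, Real.cos (θ + 2*Real.pi*(j.val : ℝ)/c) := by
        rw [habs]; exact hle
    _ ≤ ‖G c (Arc c d a)‖ := sum_f_le_abs c θ _
    _ = ‖K c d‖ := abs_G_Arc hc hdc a
    _ = R c d := abs_K hd h2d

lemma eq_abs_of_re_eq_abs {z : ℂ} (h : z.re = ‖z‖) : z = ((‖z‖ : ℝ) : ℂ) := by
  have hsq := Complex.sq_norm z
  rw [Complex.normSq_apply] at hsq
  have h2 : z.im = 0 := by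
    refine mul_self_eq_zero.mp ?_
    have h3 : ‖z‖ ^ 2 = z.re * z.re := by rw [h]; ring
    linarith
  apply Complex.ext
  · rw [Complex.ofReal_re]; exact h
  · rw [Complex.ofReal_im]; exact h2

lemma eq_arc_of_abs_eq (hd : 0 < d) (h2d : 2*d < c) {S : Finset (ZMod c)} (hS : S.card = d)
    (heq : ‖G c S‖ = R c d) : ∃ a : ZMod c, S = Arc c d a := by
  have hc : 0 < c := by omega
  haveI : NeZero c := ⟨hc.ne'⟩
  have hdc : d ≤ c := by omega
  have hcR : (0:ℝ) < c := by exact_mod_cast hc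
  have hπ := Real.pi_pos
  have hR := R_pos (c := c) hd h2d
  set θ : ℝ := (G c S).arg with hθ
  have habs : ‖G c S‖ = ∑ j ∈ S, Real.cos (θ + 2*Real.pi*(j.val : ℝ)/c) := by
    rw [← re_sum_eq, exp_neg_arg_mul, Complex.ofReal_re]
  obtain ⟨a, ha⟩ := L1core hc hd hdc θ
  have hcardA : (Arc c d a).card = d := card_Arc hc hdc a
  have hle : ∑ j ∈ S, Real.cos (θ + 2*Real.pi*(j.val : ℝ)/c)
      ≤ ∑ j ∈ Arc c d a, Real.cos (θ + 2*Real.pi*(j.val : ℝ)/c) := by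
    refine sum_le_sum_pairwise (hS.trans hcardA.symm) (fun k hk j hj => ?_)
    rw [Finset.mem_sdiff] at hk hj
    exact ha j hj.1 k hk.2
  have hle2 := sum_f_le_abs c θ (Arc c d a)
  have habsArc : ‖G c (Arc c d a)‖ = R c d := by
    rw [abs_G_Arc hc hdc a, abs_K hd h2d]
  -- all inequalities are equalities
  have hsum_eq : ∑ j ∈ S, Real.cos (θ + 2*Real.pi*(j.val : ℝ)/c)
      = ∑ j ∈ Arc c d a, Real.cos (θ + 2*Real.pi*(j.val : ℝ)/c) := by
    rw [habs] at heq
    rw [habsArc] at hle2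
    linarith
  have hArc_sum : ∑ j ∈ Arc c d a, Real.cos (θ + 2*Real.pi*(j.val : ℝ)/c) = R c d := by
    rw [habs] at heq
    rw [habsArc] at hle2
    linarith
  -- pin down θ
  have hz : Complex.exp (((-θ : ℝ) : ℂ) * Complex.I) * G c (Arc c d a)
      = ((R c d : ℝ) : ℂ) := by
    have hre : (Complex.exp (((-θ : ℝ) : ℂ) * Complex.I) * G c (Arc c d a)).re
        = ‖Complex.exp (((-θ : ℝ) : ℂ) * Complex.I) * G c (Arc c d a)‖ := by
      rw [re_sum_eq, hArc_sum, norm_mul, Complex.norm_exp_ofReal_mul_I, one_mul, habsArc]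
    have := eq_abs_of_re_eq_abs hre
    rwa [norm_mul, Complex.norm_exp_ofReal_mul_I, one_mul, habsArc] at this
  have hKval : K c d = ((R c d : ℝ) : ℂ)
      * Complex.exp (((-(((d:ℝ)-1) * Real.pi / c) : ℝ) : ℂ) * Complex.I) := by
    have hp := K_polar (c := c) (d := d) hc
    have : Complex.exp (((-(((d:ℝ)-1) * Real.pi / c) : ℝ) : ℂ) * Complex.I)
        * (Complex.exp ((((((d:ℝ)-1) * Real.pi / c) : ℝ) : ℂ) * Complex.I) * K c d)
        = Complex.exp (((-(((d:ℝ)-1) * Real.pi / c) : ℝ) : ℂ) * Complex.I) * ((R c d : ℝ) : ℂ) := by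
      rw [hp]
    rwa [← mul_assoc, ← Complex.exp_add,
      show ((-(((d:ℝ)-1) * Real.pi / c) : ℝ) : ℂ) * Complex.I
          + (((((d:ℝ)-1) * Real.pi / c) : ℝ) : ℂ) * Complex.I = 0 by push_cast; ring,
      Complex.exp_zero, one_mul, mul_comm _ (((R c d : ℝ) : ℂ))] at this
  have exp_real_mul : ∀ x y : ℝ, Complex.exp ((x:ℂ)*Complex.I) * Complex.exp ((y:ℂ)*Complex.I)
      = Complex.exp (((x+y : ℝ):ℂ)*Complex.I) := by
    intro x y
    rw [← Complex.exp_add]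
    congr 1
    push_cast
    ring
  set av : ℝ := ((a.val : ℕ) : ℝ) with hav
  set w : ℝ := -θ + -(2*Real.pi*av/c) + -(((d:ℝ)-1) * Real.pi / c) with hwdef
  have hzval : Complex.exp (((-θ : ℝ) : ℂ) * Complex.I) * G c (Arc c d a)
      = ((R c d : ℝ) : ℂ) * Complex.exp ((w : ℂ) * Complex.I) := by
    rw [G_Arc hc hdc a, g, E, hKval]
    rw [show Complex.exp (((-θ:ℝ):ℂ)*Complex.I)
        * (Complex.exp (((-(2*Real.pi*((a.val : ℕ):ℝ)/c) :ℝ):ℂ)*Complex.I)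
          * (((R c d:ℝ):ℂ) * Complex.exp (((-(((d:ℝ)-1)*Real.pi/c):ℝ):ℂ)*Complex.I)))
        = ((R c d:ℝ):ℂ) * ((Complex.exp (((-θ:ℝ):ℂ)*Complex.I)
            * Complex.exp (((-(2*Real.pi*((a.val : ℕ):ℝ)/c):ℝ):ℂ)*Complex.I))
          * Complex.exp (((-(((d:ℝ)-1)*Real.pi/c):ℝ):ℂ)*Complex.I)) from by ring]
    rw [exp_real_mul, exp_real_mul]
  have hexp1 : Complex.exp ((w : ℂ) * Complex.I) = 1 := by
    have hRne : ((R c d : ℝ) : ℂ) ≠ 0 := by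
      exact_mod_cast ne_of_gt hR
    have := hz
    rw [hzval] at this
    have h2 : ((R c d : ℝ) : ℂ) * Complex.exp ((w : ℂ) * Complex.I)
        = ((R c d : ℝ) : ℂ) * 1 := by rw [mul_one]; exact this
    exact mul_left_cancel₀ hRne h2
  obtain ⟨n, hn⟩ := Complex.exp_eq_one_iff.mp hexp1
  have hwn : w = (n : ℝ) * (2 * Real.pi) := by
    have h3 : ((w : ℝ) : ℂ) = (((n : ℝ) * (2 * Real.pi) : ℝ) : ℂ) := by
      apply mul_right_cancel₀ Complex.I_ne_zero
      rw [hn]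
      push_cast
      ring
    exact_mod_cast h3
  have hθval : θ = -(2*Real.pi*av/c) - ((d:ℝ)-1) * Real.pi / c - (n : ℝ) * (2 * Real.pi) := by
    rw [hwdef] at hwn
    linarith
  -- value of f at any point
  have hfval : ∀ j : ZMod c, Real.cos (θ + 2*Real.pi*(j.val : ℝ)/c)
      = Real.cos (2*Real.pi*((2*(((j - a).val : ℕ) : ℝ) - ((d:ℝ)-1))/2)/c) := by
    intro j
    have hcast : ((a.val : ℤ) : ZMod c) = a := by
      push_cast
      exact ZMod.natCast_rightInverse a
    rw [f_shift hc θ (a.val : ℤ) j, hcast]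
    rw [show θ + 2 * Real.pi * (((a.val : ℤ) : ℝ) + (((j - a).val : ℕ) : ℝ)) / c
        = 2*Real.pi*((2*(((j - a).val : ℕ) : ℝ) - ((d:ℝ)-1))/2)/c + (-n : ℤ) * (2 * Real.pi) by
      rw [hθval]
      push_cast [-ZMod.natCast_val]
      field_simp
      simp only [hav, ZMod.natCast_val]
      ring, Real.cos_add_int_mul_two_pi]
  -- strict comparison
  have hstrict : ∀ k ∈ S \ Arc c d a, ∀ j ∈ Arc c d a \ S,
      Real.cos (θ + 2*Real.pi*(k.val : ℝ)/c) < Real.cos (θ + 2*Real.pi*(j.val : ℝ)/c) := by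
    intro k hk j hj
    rw [Finset.mem_sdiff] at hk hj
    have hmj : ((j - a).val : ℕ) < d := (mem_Arc_iff hc hdc a j).mp hj.1
    have hmk1 : d ≤ ((k - a).val : ℕ) :=
      le_of_not_gt (fun hlt => hk.2 ((mem_Arc_iff hc hdc a k).mpr hlt))
    have hmk2 : ((k - a).val : ℕ) < c := ZMod.val_lt _
    rw [hfval j, hfval k]
    have hmjR : (((j - a).val : ℕ) : ℝ) ≤ (d:ℝ) - 1 := by
      have : (((j - a).val : ℕ) : ℝ) + 1 ≤ d := by exact_mod_cast hmj
      linarith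
    have hmj0 : (0:ℝ) ≤ (((j - a).val : ℕ) : ℝ) := by positivity
    have hmkR1 : (d:ℝ) ≤ (((k - a).val : ℕ) : ℝ) := by exact_mod_cast hmk1
    have hmkR2 : (((k - a).val : ℕ) : ℝ) ≤ (c:ℝ) - 1 := by
      have : (((k - a).val : ℕ) : ℝ) + 1 ≤ c := by exact_mod_cast hmk2
      linarith
    have hd1R : (1:ℝ) ≤ (d:ℝ) := by exact_mod_cast hd
    have hd1c : (d:ℝ) + 1 ≤ (c:ℝ) := by
      have : d + 1 ≤ c := by omega
      exact_mod_cast this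
    apply cos_compare_strict (d1 := (d:ℝ) - 1) (d2 := (d:ℝ) + 1) hcR
    · linarith
    · linarith
    · linarith
    · rw [abs_le]; constructor <;> linarith
    · linarith
    · linarith
  exact ⟨a, eq_of_sum_eq_pairwise (hS.trans hcardA.symm) hstrict hsum_eq⟩


lemma E_add (c : ℕ) (hc : 0 < c) (m n : ℕ) : E c (m + n) = E c m * E c n := by
  rw [E, E, E, ← Complex.exp_add]
  congr 1
  push_cast
  have hc' : (c : ℂ) ≠ 0 := by exact_mod_cast hc.ne'
  field_simp
  ring

lemma E_zero (c : ℕ) : E c 0 = 1 := by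
  rw [E]
  norm_num

lemma E_mul_c (c : ℕ) (hc : 0 < c) (k : ℕ) : E c (k * c) = 1 := by
  rw [E_mod c hc, Nat.mul_mod_left, E_zero]

lemma conj_E (c : ℕ) (n : ℕ) : (starRingEnd ℂ) (E c n)
    = Complex.exp (((2 * Real.pi * n / c : ℝ) : ℂ) * Complex.I) := by
  rw [E, ← Complex.exp_conj]
  congr 1
  rw [map_mul, Complex.conj_I, Complex.conj_ofReal]
  push_cast
  ring

lemma E_compl (c : ℕ) (hc : 0 < c) (k dd : ℕ) (hdd : dd ≤ c) :
    E c (k * (c - dd)) = (starRingEnd ℂ) (E c (k * dd)) := by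
  have h1 : E c (k * (c - dd)) * E c (k * dd) = 1 := by
    rw [← E_add c hc, show k * (c - dd) + k * dd = k * c by
      rw [← Nat.mul_add, Nat.sub_add_cancel hdd], E_mul_c c hc]
  have h2 : (starRingEnd ℂ) (E c (k * dd)) * E c (k * dd) = 1 := by
    rw [conj_E, E, ← Complex.exp_add, ← Complex.exp_zero]
    congr 1
    push_cast
    ring
  calc E c (k * (c - dd)) = E c (k * (c - dd)) * (E c (k * dd) * (starRingEnd ℂ) (E c (k * dd))) := by
        rw [mul_comm (E c (k * dd)), h2, mul_one]
    _ = (E c (k * (c - dd)) * E c (k * dd)) * (starRingEnd ℂ) (E c (k * dd)) := by ring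
    _ = (starRingEnd ℂ) (E c (k * dd)) := by rw [h1, one_mul]

section main
variable {c d : ℕ}

/-- abs of FT at `c - d` equals abs of FT at `d`. -/
lemma abs_FT_compl_point (hc : 0 < c) (hd : 0 < d) (hdc : d < c) (X : Finset (ZMod c)) :
    ‖fourierTransform c X (((c - d : ℕ) : ZMod c))‖
      = ‖fourierTransform c X ((d : ℕ) : ZMod c)‖ := by
  haveI : NeZero c := ⟨hc.ne'⟩
  have hval1 : (((c - d : ℕ) : ZMod c)).val = c - d := ZMod.val_cast_of_lt (by omega)
  have hval2 : (((d : ℕ) : ZMod c)).val = d := ZMod.val_cast_of_lt hdc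
  have hconj : fourierTransform c X (((c - d : ℕ) : ZMod c))
      = (starRingEnd ℂ) (fourierTransform c X ((d : ℕ) : ZMod c)) := by
    unfold fourierTransform
    rw [map_sum]
    refine Finset.sum_congr rfl fun k _ => ?_
    have hL : Complex.exp (-2 * Real.pi * Complex.I
        * ((k.val : ℂ) * (((((c - d : ℕ) : ZMod c)).val : ℕ) : ℂ)) / c) = E c (k.val * (c - d)) := by
      rw [hval1, E]
      congr 1
      push_cast
      have hc' : (c : ℂ) ≠ 0 := by exact_mod_cast hc.ne'
      field_simp
    have hR : Complex.exp (-2 * Real.pi * Complex.I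
        * ((k.val : ℂ) * ((((d : ℕ) : ZMod c)).val : ℂ)) / c) = E c (k.val * d) := by
      rw [hval2, E]
      congr 1
      push_cast
      have hc' : (c : ℂ) ≠ 0 := by exact_mod_cast hc.ne'
      field_simp
    rw [hL, hR, E_compl c hc k.val d (le_of_lt hdc)]
  rw [hconj, Complex.norm_conj]

end main


section psi
variable {c d : ℕ}

def psi (c : ℕ) (u : (ZMod c)ˣ) (S : Finset (ZMod c)) : Finset (ZMod c) :=
  S.image (fun k => k * (u : ZMod c))

lemma mul_unit_inj (u : (ZMod c)ˣ) : Function.Injective (fun k : ZMod c => k * (u : ZMod c)) := by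
  intro a b h
  have h2 := congrArg (fun x => x * ((u⁻¹ : (ZMod c)ˣ) : ZMod c)) h
  simpa [mul_assoc] using h2

lemma psi_card (u : (ZMod c)ˣ) (S : Finset (ZMod c)) : (psi c u S).card = S.card :=
  Finset.card_image_of_injective _ (mul_unit_inj u)

lemma psi_psi_inv (u : (ZMod c)ˣ) (S : Finset (ZMod c)) : psi c u⁻¹ (psi c u S) = S := by
  rw [psi, psi, Finset.image_image]
  have : ((fun k : ZMod c => k * ((u⁻¹ : (ZMod c)ˣ) : ZMod c)) ∘ (fun k => k * (u : ZMod c)))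
      = id := by
    funext k
    simp [Function.comp, mul_assoc]
  rw [this, Finset.image_id]

lemma psi_inv_psi (u : (ZMod c)ˣ) (S : Finset (ZMod c)) : psi c u (psi c u⁻¹ S) = S := by
  have := psi_psi_inv u⁻¹ S
  rwa [inv_inv] at this

lemma psi_injective (u : (ZMod c)ˣ) {S T : Finset (ZMod c)} (h : psi c u S = psi c u T) :
    S = T := by
  have := congrArg (psi c u⁻¹) h
  rwa [psi_psi_inv, psi_psi_inv] at this

lemma psi_compl [NeZero c] (u : (ZMod c)ˣ) (S : Finset (ZMod c)) :
    psi c u Sᶜ = (psi c u S)ᶜ := by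
  ext j
  simp only [psi, Finset.mem_image, Finset.mem_compl]
  constructor
  · rintro ⟨k, hk, rfl⟩ ⟨k', hk', heq⟩
    exact hk (by rwa [← mul_unit_inj u heq])
  · intro hj
    refine ⟨j * ((u⁻¹ : (ZMod c)ˣ) : ZMod c), fun hmem => hj ⟨_, hmem, by simp [mul_assoc]⟩,
      by simp [mul_assoc]⟩

lemma FT_psi (hc : 0 < c) (u : (ZMod c)ˣ) (hu : (u : ZMod c) = ((d : ℕ) : ZMod c))
    (S : Finset (ZMod c)) :
    fourierTransform c S ((d : ℕ) : ZMod c) = G c (psi c u S) := by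
  rw [FT_eq c hc S _, psi, G, Finset.sum_image (fun a _ b _ h => mul_unit_inj u h), hu]

lemma ME_iff_arc (hd : 0 < d) (h2d : 2 * d < c) (u : (ZMod c)ˣ)
    (hu : (u : ZMod c) = ((d : ℕ) : ZMod c)) (S : Finset (ZMod c)) :
    MaximallyEven c d S ↔ ∃ a : ZMod c, psi c u S = Arc c d a := by
  have hc : 0 < c := by omega
  have hdc : d ≤ c := by omega
  constructor
  · rintro ⟨hcard, hmax⟩
    have hcard' : (psi c u S).card = d := by rw [psi_card, hcard]
    have hle : ‖G c (psi c u S)‖ ≤ R c d := abs_G_le hd h2d hcard'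
    set W : Finset (ZMod c) := psi c u⁻¹ (Arc c d (0 : ZMod c)) with hW
    have hWcard : W.card = d := by rw [hW, psi_card, card_Arc hc hdc]
    have hWval : ‖fourierTransform c W ((d : ℕ) : ZMod c)‖ = R c d := by
      rw [FT_psi hc u hu, hW, psi_inv_psi, abs_G_Arc hc hdc, abs_K hd h2d]
    have hge : R c d ≤ ‖G c (psi c u S)‖ := by
      rw [← hWval, ← FT_psi hc u hu]
      exact hmax W hWcard
    exact eq_arc_of_abs_eq hd h2d hcard' (le_antisymm hle hge)
  · rintro ⟨a, ha⟩
    have hcard : S.card = d := by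
      rw [← psi_card u, ha, card_Arc hc hdc]
    refine ⟨hcard, fun B hB => ?_⟩
    rw [FT_psi hc u hu, FT_psi hc u hu, ha, abs_G_Arc hc hdc, abs_K hd h2d]
    exact abs_G_le hd h2d (by rw [psi_card, hB])



lemma E_pow (c : ℕ) (n : ℕ) : E c n = (E c 1) ^ n := by
  rw [E, E, ← Complex.exp_nat_mul]
  congr 1
  push_cast
  ring

lemma zeta_ne_one (hc2 : 2 ≤ c) : E c 1 ≠ 1 := by
  intro h
  rw [E] at h
  obtain ⟨n, hn⟩ := Complex.exp_eq_one_iff.mp h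
  have h2 : ((-(2 * Real.pi * (1:ℕ) / c) : ℝ) : ℂ) = (((n : ℝ) * (2 * Real.pi) : ℝ) : ℂ) := by
    apply mul_right_cancel₀ Complex.I_ne_zero
    rw [hn]
    push_cast
    ring
  have h3 : -(2 * Real.pi * ((1:ℕ) : ℝ) / c) = (n : ℝ) * (2 * Real.pi) := by exact_mod_cast h2
  have hcR : (0:ℝ) < c := by
    have : 0 < c := by omega
    exact_mod_cast this
  have h4 : ((n * c : ℤ) : ℝ) = -1 := by
    push_cast
    rw [eq_comm, neg_eq_iff_eq_neg]
    field_simp at h3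
    push_cast at h3
    nlinarith [Real.pi_pos]
  have h5 : (n * c : ℤ) = -1 := by exact_mod_cast h4
  have hdvd : (c : ℤ) ∣ 1 := ⟨-n, by linarith⟩
  have := Int.le_of_dvd (by norm_num) hdvd
  omega

lemma K_cc_zero (hc2 : 2 ≤ c) : K c c = 0 := by
  have hc : 0 < c := by omega
  rw [K, Finset.sum_congr rfl (fun m _ => E_pow c m), geom_sum_eq (zeta_ne_one hc2),
    ← E_pow, E_mod c hc, Nat.mod_self, E_zero, sub_self, zero_div]

lemma G_univ_zero [NeZero c] (hc2 : 2 ≤ c) : G c (Finset.univ : Finset (ZMod c)) = 0 := by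
  have hc : 0 < c := by omega
  have h1 : G c (Finset.univ : Finset (ZMod c)) = ∑ n ∈ Finset.range c, E c n := by
    rw [G]
    refine Finset.sum_nbij' (fun j => j.val) (fun n => ((n : ℕ) : ZMod c)) ?_ ?_ ?_ ?_ ?_
    · intro a _
      exact Finset.mem_range.mpr (ZMod.val_lt a)
    · intro a _
      exact Finset.mem_univ _
    · intro a _
      exact ZMod.natCast_rightInverse a
    · intro a ha
      exact ZMod.val_cast_of_lt (Finset.mem_range.mp ha)
    · intro a _
      rfl
  rw [h1, ← K, K_cc_zero hc2]

lemma psi_univ (u : (ZMod c)ˣ) [NeZero c] :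
    psi c u (Finset.univ : Finset (ZMod c)) = Finset.univ := by
  apply Finset.eq_univ_of_card
  rw [psi_card, Finset.card_univ]

lemma FT_univ_zero [NeZero c] (hc2 : 2 ≤ c) (u : (ZMod c)ˣ) (hu : (u : ZMod c) = ((d : ℕ) : ZMod c)) :
    fourierTransform c (Finset.univ : Finset (ZMod c)) ((d : ℕ) : ZMod c) = 0 := by
  have hc : 0 < c := by omega
  rw [FT_psi hc u hu, psi_univ, G_univ_zero hc2]

lemma FT_compl_abs [NeZero c] (hc2 : 2 ≤ c) (u : (ZMod c)ˣ) (hu : (u : ZMod c) = ((d : ℕ) : ZMod c))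
    (X : Finset (ZMod c)) :
    ‖fourierTransform c Xᶜ ((d : ℕ) : ZMod c)‖
      = ‖fourierTransform c X ((d : ℕ) : ZMod c)‖ := by
  have hsum : fourierTransform c Xᶜ ((d : ℕ) : ZMod c)
      + fourierTransform c X ((d : ℕ) : ZMod c)
      = fourierTransform c (Finset.univ : Finset (ZMod c)) ((d : ℕ) : ZMod c) :=
    Finset.sum_compl_add_sum X _
  rw [FT_univ_zero hc2 u hu] at hsum
  have : fourierTransform c Xᶜ ((d : ℕ) : ZMod c)
      = - fourierTransform c X ((d : ℕ) : ZMod c) := by linear_combination hsum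
  rw [this, norm_neg]

lemma ME_compl [NeZero c] (hd : 0 < d) (h2d : 2 * d < c) (u : (ZMod c)ˣ)
    (hu : (u : ZMod c) = ((d : ℕ) : ZMod c)) (B : Finset (ZMod c)) :
    (MaximallyEven c (c - d) B ↔ MaximallyEven c d Bᶜ) := by
  have hc : 0 < c := by omega
  have hc2 : 2 ≤ c := by omega
  have hdc : d < c := by omega
  have hcard_c : Fintype.card (ZMod c) = c := ZMod.card c
  constructor
  · rintro ⟨hcard, hmax⟩
    have hBc : Bᶜ.card = d := by
      rw [Finset.card_compl, hcard_c, hcard]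
      omega
    refine ⟨hBc, fun C hC => ?_⟩
    have hCc : Cᶜ.card = c - d := by
      rw [Finset.card_compl, hcard_c, hC]
    calc ‖fourierTransform c C ((d : ℕ) : ZMod c)‖
        = ‖fourierTransform c Cᶜ ((d : ℕ) : ZMod c)‖ := (FT_compl_abs hc2 u hu C).symm
      _ = ‖fourierTransform c Cᶜ (((c - d : ℕ) : ZMod c))‖ :=
          (abs_FT_compl_point hc hd hdc Cᶜ).symm
      _ ≤ ‖fourierTransform c B (((c - d : ℕ) : ZMod c))‖ := hmax Cᶜ hCc
      _ = ‖fourierTransform c B ((d : ℕ) : ZMod c)‖ := abs_FT_compl_point hc hd hdc B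
      _ = ‖fourierTransform c Bᶜ ((d : ℕ) : ZMod c)‖ := (FT_compl_abs hc2 u hu B).symm
  · rintro ⟨hcard, hmax⟩
    have hB : B.card = c - d := by
      have h1 : Bᶜ.card = c - B.card := by rw [Finset.card_compl, hcard_c]
      have h2 : B.card ≤ c := by
        have := Finset.card_le_univ B
        rwa [hcard_c] at this
      omega
    refine ⟨hB, fun B' hB' => ?_⟩
    have hB'c : B'ᶜ.card = d := by
      rw [Finset.card_compl, hcard_c, hB']
      omega
    calc ‖fourierTransform c B' (((c - d : ℕ) : ZMod c))‖
        = ‖fourierTransform c B' ((d : ℕ) : ZMod c)‖ := abs_FT_compl_point hc hd hdc B'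
      _ = ‖fourierTransform c B'ᶜ ((d : ℕ) : ZMod c)‖ := (FT_compl_abs hc2 u hu B').symm
      _ ≤ ‖fourierTransform c Bᶜ ((d : ℕ) : ZMod c)‖ := hmax B'ᶜ hB'c
      _ = ‖fourierTransform c B ((d : ℕ) : ZMod c)‖ := FT_compl_abs hc2 u hu B
      _ = ‖fourierTransform c B (((c - d : ℕ) : ZMod c))‖ :=
          (abs_FT_compl_point hc hd hdc B).symm


lemma psi_inter (u : (ZMod c)ˣ) (S T : Finset (ZMod c)) :
    psi c u (S ∩ T) = psi c u S ∩ psi c u T :=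
  Finset.image_inter S T (mul_unit_inj u)

lemma psi_disjoint (u : (ZMod c)ˣ) (S T : Finset (ZMod c)) :
    Disjoint S T ↔ Disjoint (psi c u S) (psi c u T) := by
  rw [Finset.disjoint_iff_inter_eq_empty, Finset.disjoint_iff_inter_eq_empty, ← psi_inter]
  constructor
  · intro h
    rw [h, psi, Finset.image_empty]
  · intro h
    apply psi_injective u
    rw [h, psi, Finset.image_empty]

lemma subset_iff_disjoint_compl [NeZero c] (A B : Finset (ZMod c)) :
    A ⊆ B ↔ Disjoint A Bᶜ := by
  rw [Finset.disjoint_left]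
  constructor
  · intro h x hx hx'
    exact (Finset.mem_compl.mp hx') (h hx)
  · intro h x hx
    by_contra hB
    exact h hx (Finset.mem_compl.mpr hB)

lemma arc_inj (hc : 0 < c) (hd : 0 < d) (h2d : 2 * d < c) {a b : ZMod c}
    (h : Arc c d a = Arc c d b) : a = b := by
  haveI : NeZero c := ⟨hc.ne'⟩
  have hdc : d ≤ c := by omega
  have hself : ∀ e : ZMod c, e ∈ Arc c d e := fun e =>
    (mem_Arc_iff hc hdc e e).mpr (by rw [sub_self, ZMod.val_zero]; exact hd)
  have hb : (b - a).val < d := (mem_Arc_iff hc hdc a b).mp (h ▸ hself b)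
  have ha : (a - b).val < d := (mem_Arc_iff hc hdc b a).mp (h.symm ▸ hself a)
  set x := (b - a).val with hx
  set y := (a - b).val with hy
  have hsum : (((x + y : ℕ) : ZMod c)) = 0 := by
    push_cast
    rw [ZMod.natCast_rightInverse (b - a), ZMod.natCast_rightInverse (a - b)]
    ring
  have hdvd : c ∣ x + y := (ZMod.natCast_eq_zero_iff _ _).mp hsum
  have hxy : x + y = 0 := by
    rcases Nat.eq_zero_or_pos (x + y) with h0 | hpos
    · exact h0
    · exact absurd (Nat.le_of_dvd hpos hdvd) (by omega)
  have hx0 : b - a = 0 := (ZMod.val_eq_zero _).mp (by omega)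
  exact (sub_eq_zero.mp hx0).symm

lemma arc_disj_iff (hd : 0 < d) (h2d : 2 * d < c) (a b : ZMod c) :
    Disjoint (Arc c d a) (Arc c d b) ↔ (d ≤ (b - a).val ∧ (b - a).val ≤ c - d) := by
  have hc : 0 < c := by omega
  haveI : NeZero c := ⟨hc.ne'⟩
  have hdc : d ≤ c := by omega
  have hself : ∀ e : ZMod c, e ∈ Arc c d e := fun e =>
    (mem_Arc_iff hc hdc e e).mpr (by rw [sub_self, ZMod.val_zero]; exact hd)
  constructor
  · intro hdisj
    constructor
    · by_contra hcon
      push_neg at hcon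
      exact Finset.disjoint_left.mp hdisj ((mem_Arc_iff hc hdc a b).mpr hcon) (hself b)
    · by_contra hcon
      push_neg at hcon
      have hba : b - a ≠ 0 := by
        intro h0
        rw [h0, ZMod.val_zero] at hcon
        omega
      have hav : (a - b).val < d := by
        have hneg : a - b = -(b - a) := by ring
        rw [hneg, ZMod.neg_val, if_neg hba]
        have := ZMod.val_lt (b - a)
        omega
      exact Finset.disjoint_left.mp hdisj (hself a) ((mem_Arc_iff hc hdc b a).mpr hav)
  · rintro ⟨h1, h2⟩
    rw [Finset.disjoint_left]
    intro j hj hj'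
    have hx : (j - a).val < d := (mem_Arc_iff hc hdc a j).mp hj
    have hy : (j - b).val < d := (mem_Arc_iff hc hdc b j).mp hj'
    set x := (j - a).val with hxd
    set y := (j - b).val with hyd
    set e := (b - a).val with hed
    have hcast : (((e : ℕ) : ℤ) : ZMod c) = ((((x : ℤ) - (y : ℤ)) : ℤ) : ZMod c) := by
      push_cast
      rw [ZMod.natCast_rightInverse (b - a), ZMod.natCast_rightInverse (j - a),
        ZMod.natCast_rightInverse (j - b)]
      ring
    have hmod := (ZMod.intCast_eq_intCast_iff _ _ _).mp hcast
    obtain ⟨q, hq⟩ := hmod.dvd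
    have hxI : (x : ℤ) < d := by exact_mod_cast hx
    have hyI : (y : ℤ) < d := by exact_mod_cast hy
    have h1I : (d : ℤ) ≤ e := by exact_mod_cast h1
    have h2I : (e : ℤ) ≤ (c : ℤ) - d := by
      have : (e : ℕ) ≤ c - d := h2
      omega
    have hx0 : (0 : ℤ) ≤ x := Int.ofNat_nonneg x
    have hy0 : (0 : ℤ) ≤ y := Int.ofNat_nonneg y
    have hcI : 2 * (d : ℤ) < c := by exact_mod_cast h2d
    have hdI : (0 : ℤ) < d := by exact_mod_cast hd
    -- hq : (x - y) - e = c * q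
    rcases lt_trichotomy q 0 with hq0 | hq0 | hq0
    · have : q ≤ -1 := by omega
      nlinarith
    · rw [hq0, mul_zero] at hq
      omega
    · have : 1 ≤ q := by omega
      nlinarith

lemma count_b [NeZero c] (hd : 0 < d) (h2d : 2 * d < c) (a : ZMod c) :
    (Finset.univ.filter (fun b : ZMod c => d ≤ (b - a).val ∧ (b - a).val ≤ c - d)).card
      = c - 2 * d + 1 := by
  have hc : 0 < c := by omega
  haveI : NeZero c := ⟨hc.ne'⟩
  have himg : (Finset.univ.filter (fun b : ZMod c => d ≤ (b - a).val ∧ (b - a).val ≤ c - d))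
      = (Finset.Icc d (c - d)).image (fun n : ℕ => a + ((n : ℕ) : ZMod c)) := by
    ext b
    simp only [Finset.mem_filter, Finset.mem_univ, true_and, Finset.mem_image, Finset.mem_Icc]
    constructor
    · rintro ⟨h1, h2⟩
      refine ⟨(b - a).val, ⟨h1, h2⟩, ?_⟩
      rw [ZMod.natCast_rightInverse (b - a)]
      ring
    · rintro ⟨n, ⟨hn1, hn2⟩, rfl⟩
      have hnc : n < c := by omega
      rw [add_sub_cancel_left, ZMod.val_cast_of_lt hnc]
      exact ⟨hn1, hn2⟩
  rw [himg, Finset.card_image_of_injOn, Nat.card_Icc]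
  · omega
  · intro m hm m' hm' h
    rw [Finset.mem_coe, Finset.mem_Icc] at hm hm'
    exact natCast_inj_lt hc (by omega) (by omega) (add_left_cancel h)

end psi

end
end MEaux

open MEaux in
/-- For `gcd(c,d) = 1` and `2d < c`, a maximally even set of cardinality `d` is
contained in a maximally even set of cardinality `c - d`; more precisely it is
contained in exactly `c - 2d + 1` of them. -/
theorem maximallyEven_subset_compl_card (c d : ℕ) (hc : 0 < c) (hd : 0 < d)
    (hgcd : Nat.gcd c d = 1) (h2d : 2 * d < c)
    (A : Finset (ZMod c)) (hA : MaximallyEven c d A) :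
    (∃ B : Finset (ZMod c), MaximallyEven c (c - d) B ∧ A ⊆ B) ∧
    Nat.card {B : Finset (ZMod c) // MaximallyEven c (c - d) B ∧ A ⊆ B} =
      c - 2 * d + 1 := by
  classical
  haveI : NeZero c := ⟨hc.ne'⟩
  have hdc : d < c := by omega
  have hcop : Nat.Coprime d c := Nat.Coprime.symm hgcd
  set u := ZMod.unitOfCoprime d hcop with hudef
  have hu : (u : ZMod c) = ((d : ℕ) : ZMod c) := ZMod.coe_unitOfCoprime d hcop
  obtain ⟨a₀, ha₀⟩ := (ME_iff_arc hd h2d u hu A).mp hA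
  have hPiff : ∀ B : Finset (ZMod c), (MaximallyEven c (c - d) B ∧ A ⊆ B) ↔
      (∃ b : ZMod c, psi c u Bᶜ = Arc c d b ∧ Disjoint (Arc c d a₀) (Arc c d b)) := by
    intro B
    rw [ME_compl hd h2d u hu B, ME_iff_arc hd h2d u hu Bᶜ,
      subset_iff_disjoint_compl, psi_disjoint u, ha₀]
    constructor
    · rintro ⟨⟨b, hb⟩, hdisj⟩
      exact ⟨b, hb, by rwa [hb] at hdisj⟩
    · rintro ⟨b, hb, hdisj⟩
      exact ⟨⟨b, hb⟩, by rwa [hb]⟩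
  set Φ : {b : ZMod c // Disjoint (Arc c d a₀) (Arc c d b)} →
      {B : Finset (ZMod c) // MaximallyEven c (c - d) B ∧ A ⊆ B} :=
    fun b => ⟨(psi c u⁻¹ (Arc c d b.1))ᶜ, (hPiff _).mpr ⟨b.1, by
      rw [compl_compl, psi_inv_psi], b.2⟩⟩ with hΦ
  have hinj : Function.Injective Φ := by
    rintro ⟨b, hb⟩ ⟨b', hb'⟩ h
    simp only [hΦ, Subtype.mk.injEq] at h
    have h2 := congrArg compl h
    rw [compl_compl, compl_compl] at h2
    exact Subtype.ext (arc_inj hc hd h2d (psi_injective u⁻¹ h2))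
  have hsurj : Function.Surjective Φ := by
    rintro ⟨B, hB⟩
    obtain ⟨b, hb, hdisj⟩ := (hPiff B).mp hB
    refine ⟨⟨b, hdisj⟩, ?_⟩
    apply Subtype.ext
    simp only [hΦ]
    rw [← hb, psi_psi_inv, compl_compl]
  have hQex : Disjoint (Arc c d a₀) (Arc c d (a₀ + ((d : ℕ) : ZMod c))) := by
    rw [arc_disj_iff hd h2d]
    rw [add_sub_cancel_left, ZMod.val_cast_of_lt hdc]
    exact ⟨le_rfl, by omega⟩
  constructor
  · exact ⟨(Φ ⟨_, hQex⟩).1, (Φ ⟨_, hQex⟩).2⟩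
  · have hcardeq : Nat.card {B : Finset (ZMod c) // MaximallyEven c (c - d) B ∧ A ⊆ B}
        = Nat.card {b : ZMod c // Disjoint (Arc c d a₀) (Arc c d b)} :=
      Nat.card_congr (Equiv.ofBijective Φ ⟨hinj, hsurj⟩).symm
    rw [hcardeq, Nat.card_eq_fintype_card, Fintype.card_subtype]
    rw [Finset.filter_congr (fun b _ => (arc_disj_iff hd h2d a₀ b))]
    exact count_b hd h2d a₀
end

section
/- (Maximally even sets with gcd > 1 are modes of limited transposition) Let c be a positive integer, 1 ≤ d ≤ c, and set m = gcd(c,d). Suppose m > 1 and let A ⊆ ZMod c be a maximally even set of cardinality d. Then A is (c/m)-periodic: { a + (c/m : ZMod c) : a ∈ A } = A. -/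
/-- Auxiliary exponential function `k ↦ exp(-2πi·k·d/c)`. -/
noncomputable def gfun (c d k : ℕ) : ℂ :=
  Complex.exp (-2 * Real.pi * Complex.I * ((k : ℂ) * (d : ℂ)) / c)

lemma gfun_add (c d n' q : ℕ) (hc : 0 < c) (hq : n' * d = c * q) (k : ℕ) :
    gfun c d (k + n') = gfun c d k := by
  have hc0 : (c : ℂ) ≠ 0 := Nat.cast_ne_zero.mpr hc.ne'
  have harg : (-2 * Real.pi * Complex.I * (((k + n' : ℕ) : ℂ) * (d : ℂ)) / c)
      = (-2 * Real.pi * Complex.I * ((k : ℂ) * (d : ℂ)) / c)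
        + ((-(q:ℤ) : ℤ) : ℂ) * (2 * Real.pi * Complex.I) := by
    have hcq : ((n' : ℂ)) * (d : ℂ) = (c : ℂ) * q := by
      exact_mod_cast congrArg (Nat.cast : ℕ → ℂ) hq
    push_cast
    field_simp
    linear_combination (-1 : ℂ) * hcq
  unfold gfun
  rw [harg, Complex.exp_add]
  have h1 := Complex.exp_int_mul_two_pi_mul_I (-(q:ℤ))
  push_cast at h1 ⊢
  rw [h1, mul_one]

lemma gfun_mod (c d n' q : ℕ) (hc : 0 < c) (hq : n' * d = c * q) (k : ℕ) :
    gfun c d k = gfun c d (k % n') := by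
  conv_lhs => rw [← Nat.mod_add_div k n']
  generalize k / n' = j
  induction j with
  | zero => simp
  | succ i ih => rw [Nat.mul_succ, ← add_assoc, gfun_add c d n' q hc hq, ih]

lemma gfun_inj (c d : ℕ) (hc : 0 < c) (hd : 0 < d) (r s : ℕ)
    (hr : r < c / Nat.gcd c d) (hs : s < c / Nat.gcd c d)
    (h : gfun c d r = gfun c d s) : r = s := by
  set m := Nat.gcd c d with hm
  set n := c / m with hn
  set d' := d / m with hd'
  have hm0 : 0 < m := Nat.gcd_pos_of_pos_left _ hc
  have hcmn : c = m * n := (Nat.mul_div_cancel' (Nat.gcd_dvd_left c d)).symm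
  have hdmd : d = m * d' := (Nat.mul_div_cancel' (Nat.gcd_dvd_right c d)).symm
  have hn0 : 0 < n := Nat.div_pos (Nat.le_of_dvd hc (Nat.gcd_dvd_left c d)) hm0
  have hcop : Nat.Coprime n d' := Nat.coprime_div_gcd_div_gcd hm0
  have hc0 : (c : ℂ) ≠ 0 := Nat.cast_ne_zero.mpr hc.ne'
  have hpi : (Real.pi : ℂ) ≠ 0 := by exact_mod_cast Real.pi_ne_zero
  have h2pi : (-2 * (Real.pi:ℂ) * Complex.I) ≠ 0 := by
    simp [Complex.I_ne_zero, hpi]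
  unfold gfun at h
  rw [Complex.exp_eq_exp_iff_exists_int] at h
  obtain ⟨k, hk⟩ := h
  have h3 : (-2 * (Real.pi:ℂ) * Complex.I) * ((r:ℂ)*d) =
      (-2 * (Real.pi:ℂ) * Complex.I) * ((s:ℂ)*d - k*c) := by
    have hk' := congrArg (fun z => z * (c:ℂ)) hk
    simp only [add_mul, div_mul_cancel₀ _ hc0] at hk'
    linear_combination hk'
  have h2 : ((r:ℂ)*d) = ((s:ℂ)*d - k*c) := mul_left_cancel₀ h2pi h3
  have hz : (r : ℤ) * d = (s : ℤ) * d - k * c := by exact_mod_cast h2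
  have hdvd : (n : ℤ) ∣ ((s : ℤ) - r) * d' := by
    refine ⟨k, ?_⟩
    have hcz : (c : ℤ) = m * n := by exact_mod_cast hcmn
    have hdz : (d : ℤ) = m * d' := by exact_mod_cast hdmd
    have hzz : ((s:ℤ) - r) * ((m:ℤ) * d') = k * ((m:ℤ) * n) := by
      rw [← hcz, ← hdz]; linarith [hz]
    have hmz : (m : ℤ) ≠ 0 := by exact_mod_cast hm0.ne'
    apply mul_left_cancel₀ hmz
    linear_combination hzz
  have hcopz : IsCoprime (n : ℤ) (d' : ℤ) := by
    rw [Int.isCoprime_iff_gcd_eq_one]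
    simpa using hcop
  have hdvd2 : (n : ℤ) ∣ ((s : ℤ) - r) := hcopz.dvd_of_dvd_mul_right hdvd
  have habs : |(s : ℤ) - r| < n := by
    rw [abs_lt]; omega
  rcases eq_or_ne ((s:ℤ) - r) 0 with h0 | h0
  · omega
  · have := Int.le_of_dvd (abs_pos.mpr h0) ((dvd_abs _ _).mpr hdvd2)
    omega

lemma card_residue (c n r : ℕ) [NeZero c] (hn : n ∣ c) (hr : r < n) :
    (Finset.univ.filter (fun y : ZMod c => y.val % n = r)).card = c / n := by
  have hc : 0 < c := Nat.pos_of_ne_zero (NeZero.ne c)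
  have hn0 : 0 < n := by omega
  obtain ⟨m', hm'⟩ := hn
  have hm'0 : 0 < m' := by
    rcases Nat.eq_zero_or_pos m' with h | h
    · subst h; simp at hm'; omega
    · exact h
  have hdiv : c / n = m' := by rw [hm', Nat.mul_div_cancel_left _ hn0]
  rw [hdiv, ← Finset.card_range m']
  have hlt : ∀ k, k < m' → r + n * k < c := by
    intro k hk
    have h2 : n * (k + 1) ≤ n * m' := Nat.mul_le_mul_left n (by omega)
    have h3 : n * (k + 1) = n * k + n := by ring
    omega
  apply Finset.card_nbij' (fun y => y.val / n) (fun k => ((r + n * k : ℕ) : ZMod c))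
  · intro y hy
    simp only [Finset.mem_coe, Finset.mem_range]
    exact Nat.div_lt_of_lt_mul (hm' ▸ ZMod.val_lt y)
  · intro k hk
    simp only [Finset.mem_coe, Finset.mem_range] at hk
    simp only [Finset.mem_coe, Finset.mem_filter, Finset.mem_univ, true_and]
    rw [ZMod.val_cast_of_lt (hlt k hk), Nat.add_mul_mod_self_left, Nat.mod_eq_of_lt hr]
  · intro y hy
    simp only [Finset.mem_coe, Finset.mem_filter, Finset.mem_univ, true_and] at hy
    beta_reduce
    rw [← hy, Nat.mod_add_div]
    exact ZMod.natCast_rightInverse y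
  · intro k hk
    simp only [Finset.mem_coe, Finset.mem_range] at hk
    beta_reduce
    rw [ZMod.val_cast_of_lt (hlt k hk), Nat.add_mul_div_left _ _ hn0,
      Nat.div_eq_of_lt hr, zero_add]

/-- If `m = gcd(c,d) > 1`, a maximally even set of cardinality `d` is a mode of
limited transposition: it is invariant under translation by `c/m`. -/
theorem maximallyEven_limited_transposition (c d : ℕ) (hc : 0 < c) (hd1 : 1 ≤ d)
    (hdc : d ≤ c) (hm : 1 < Nat.gcd c d)
    (A : Finset (ZMod c)) (hA : MaximallyEven c d A) :
    A.image (fun a => a + ((c / Nat.gcd c d : ℕ) : ZMod c)) = A := by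
  haveI : NeZero c := ⟨hc.ne'⟩
  set m := Nat.gcd c d with hmdef
  set n := c / m with hndef
  set t : ZMod c := ((n : ℕ) : ZMod c) with htdef
  -- it suffices to show `A` is closed under `+ t`
  suffices hcl : ∀ a ∈ A, a + t ∈ A by
    apply Finset.eq_of_subset_of_card_le
    · intro x hx
      simp only [Finset.mem_image] at hx
      obtain ⟨a, ha, rfl⟩ := hx
      exact hcl a ha
    · rw [Finset.card_image_of_injective _ (add_left_injective t)]
  rcases eq_or_lt_of_le hdc with heq | hdlt
  · -- degenerate case d = c : then A = univ
    have hAu : A = Finset.univ := by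
      rw [← Finset.card_eq_iff_eq_univ, hA.1, heq, ZMod.card]
    intro a _
    rw [hAu]
    exact Finset.mem_univ _
  -- main case d < c
  have hm0 : 0 < m := Nat.gcd_pos_of_pos_left _ hc
  have hn0 : 0 < n := Nat.div_pos (Nat.le_of_dvd hc (Nat.gcd_dvd_left c d)) hm0
  have hnc : n < c := Nat.div_lt_self hc hm
  have hndvd : n ∣ c := Nat.div_dvd_of_dvd (Nat.gcd_dvd_left c d)
  have hcmn : c = m * n := (Nat.mul_div_cancel' (Nat.gcd_dvd_left c d)).symm
  have hcn : c / n = m := by rw [hcmn, Nat.mul_div_cancel _ hn0]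
  have hnd : n * d = c * (d / m) := by
    have h2 : d = m * (d / m) := (Nat.mul_div_cancel' (Nat.gcd_dvd_right c d)).symm
    calc n * d = n * (m * (d / m)) := by rw [← h2]
    _ = (m * n) * (d / m) := by ring
    _ = c * (d / m) := by rw [← hcmn]
  have hmod : ∀ k, gfun c d k = gfun c d (k % n) := gfun_mod c d n (d / m) hc hnd
  -- the Fourier transform as a sum of gfun values
  have hDval : ((d : ZMod c)).val = d := ZMod.val_cast_of_lt hdlt
  have hFT : ∀ B : Finset (ZMod c),
      fourierTransform c B ((d : ZMod c)) = ∑ k ∈ B, gfun c d k.val := by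
    intro B
    unfold fourierTransform gfun
    rw [hDval]
  -- periodicity of gfun ∘ val under + t
  have htval : t.val = n := ZMod.val_cast_of_lt hnc
  have hperiod : ∀ x : ZMod c, gfun c d ((x + t).val) = gfun c d x.val := by
    intro x
    rw [ZMod.val_add, htval, hmod ((x.val + n) % c), Nat.mod_mod_of_dvd _ hndvd,
      ← hmod (x.val + n), gfun_add c d n (d / m) hc hnd]
  -- residue of x modulo n
  set ρ : ZMod c → ℕ := fun x => x.val % n with hρdef
  have hρlt : ∀ x, ρ x < n := fun x => Nat.mod_lt _ hn0
  have hρ_of_g : ∀ x y : ZMod c, gfun c d x.val = gfun c d y.val → ρ x = ρ y := by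
    intro x y h
    apply gfun_inj c d hc (by omega) _ _ (hρlt x) (hρlt y)
    rw [← hmod, ← hmod]
    exact h
  have hg_of_ρ : ∀ x y : ZMod c, ρ x = ρ y → gfun c d x.val = gfun c d y.val := by
    intro x y h
    rw [hmod x.val, hmod y.val]
    exact congrArg _ h
  have hρt : ∀ x : ZMod c, ρ (x + t) = ρ x := fun x => hρ_of_g _ _ (hperiod x)
  -- by contradiction
  by_contra hcon
  push_neg at hcon
  obtain ⟨a, haA, hat⟩ := hcon
  by_cases hcase : ∃ u ∈ A, ∃ v, v ∉ A ∧ ρ v = ρ u ∧ ρ u ≠ ρ a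
  · -- exchange argument: strictly increase |F|, contradiction
    obtain ⟨u, huA, v, hvA, hρv, hρne⟩ := hcase
    set F : ℂ := ∑ k ∈ A, gfun c d k.val with hF
    set δ : ℂ := gfun c d a.val - gfun c d u.val with hδ
    have hδ0 : δ ≠ 0 := by
      rw [hδ, sub_ne_zero]
      intro h
      exact hρne (hρ_of_g a u h).symm
    have hune : u ≠ a := by
      intro h; exact hρne (by rw [h])
    -- B₊ : move one element from the class of u to the class of a
    have hatu : a + t ∉ A.erase u := fun h => hat (Finset.mem_of_mem_erase h)
    have hcardp : (insert (a + t) (A.erase u)).card = d := by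
      rw [Finset.card_insert_of_notMem hatu, Finset.card_erase_of_mem huA, hA.1]
      omega
    have hsump : ∑ k ∈ insert (a + t) (A.erase u), gfun c d k.val = F + δ := by
      rw [Finset.sum_insert hatu, Finset.sum_erase_eq_sub huA, hperiod a, hδ]
      ring
    -- B₋ : move one element from the class of a to the class of u
    have hva : v ∉ A.erase a := fun h => hvA (Finset.mem_of_mem_erase h)
    have hcardm : (insert v (A.erase a)).card = d := by
      rw [Finset.card_insert_of_notMem hva, Finset.card_erase_of_mem haA, hA.1]
      omega
    have hsumm : ∑ k ∈ insert v (A.erase a), gfun c d k.val = F - δ := by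
      rw [Finset.sum_insert hva, Finset.sum_erase_eq_sub haA, hg_of_ρ v u hρv, hδ]
      ring
    have h1 := hA.2 _ hcardp
    have h2 := hA.2 _ hcardm
    rw [hFT, hFT, hsump] at h1
    rw [hFT, hFT, hsumm] at h2
    rw [← hF] at h1 h2
    -- parallelogram law
    have e1 : Complex.normSq (F + δ) ≤ Complex.normSq F := by
      rw [← Complex.sq_norm, ← Complex.sq_norm]
      exact pow_le_pow_left₀ (norm_nonneg _) h1 2
    have e2 : Complex.normSq (F - δ) ≤ Complex.normSq F := by
      rw [← Complex.sq_norm, ← Complex.sq_norm]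
      exact pow_le_pow_left₀ (norm_nonneg _) h2 2
    have par : Complex.normSq (F + δ) + Complex.normSq (F - δ)
        = 2 * Complex.normSq F + 2 * Complex.normSq δ := by
      simp only [Complex.normSq_apply, Complex.add_re, Complex.add_im,
        Complex.sub_re, Complex.sub_im]
      ring
    have hle : Complex.normSq δ ≤ 0 := by linarith
    exact hδ0 (Complex.normSq_eq_zero.mp (le_antisymm hle (Complex.normSq_nonneg δ)))
  · -- counting argument: every class other than that of a is full or empty
    push_neg at hcase
    have hsum : ∑ r ∈ Finset.range n, (A.filter (fun x => ρ x = r)).card = d := by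
      rw [← hA.1]
      exact (Finset.card_eq_sum_card_fiberwise (fun x _ => Finset.mem_range.mpr (hρlt x))).symm
    have hr0mem : ρ a ∈ Finset.range n := Finset.mem_range.mpr (hρlt a)
    have hsplit : (A.filter (fun x => ρ x = ρ a)).card
        + ∑ r ∈ (Finset.range n).erase (ρ a), (A.filter (fun x => ρ x = r)).card = d := by
      rw [← hsum, Finset.add_sum_erase _ (fun r => (A.filter (fun x => ρ x = r)).card) hr0mem]
    have hdvdsum : m ∣ ∑ r ∈ (Finset.range n).erase (ρ a),
        (A.filter (fun x => ρ x = r)).card := by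
      apply Finset.dvd_sum
      intro r hr
      have hrne : r ≠ ρ a := Finset.ne_of_mem_erase hr
      have hrlt : r < n := Finset.mem_range.mp (Finset.mem_of_mem_erase hr)
      by_cases hex : ∃ u ∈ A, ρ u = r
      · obtain ⟨u, huA, hu⟩ := hex
        have hfull : A.filter (fun x => ρ x = r)
            = Finset.univ.filter (fun x => ρ x = r) := by
          apply Finset.Subset.antisymm
          · exact Finset.filter_subset_filter _ (Finset.subset_univ A)
          · intro v hv
            simp only [Finset.mem_filter, Finset.mem_univ, true_and] at hv
            simp only [Finset.mem_filter]
            refine ⟨?_, hv⟩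
            by_contra hvA
            have hvu : ρ v = ρ u := hv.trans hu.symm
            have hua : ρ u = ρ a := hcase u huA v hvA hvu
            exact hrne (hu.symm.trans hua)
        have hcardr : (Finset.univ.filter (fun x : ZMod c => ρ x = r)).card = m := by
          have h := card_residue c n r hndvd hrlt
          rw [hcn] at h
          exact h
        rw [hfull, hcardr]
      · push_neg at hex
        have : A.filter (fun x => ρ x = r) = ∅ := by
          apply Finset.filter_eq_empty_iff.mpr
          intro x hx
          exact hex x hx
        rw [this, Finset.card_empty]
        exact dvd_zero m
    have hdvd_d : m ∣ d := Nat.gcd_dvd_right c d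
    have hdvdx : m ∣ (A.filter (fun x => ρ x = ρ a)).card := by
      have heq : (A.filter (fun x => ρ x = ρ a)).card
          = d - ∑ r ∈ (Finset.range n).erase (ρ a), (A.filter (fun x => ρ x = r)).card := by
        omega
      rw [heq]
      exact Nat.dvd_sub hdvd_d hdvdsum
    have hx0pos : 0 < (A.filter (fun x => ρ x = ρ a)).card := by
      apply Finset.card_pos.mpr
      exact ⟨a, Finset.mem_filter.mpr ⟨haA, rfl⟩⟩
    have hx0lt : (A.filter (fun x => ρ x = ρ a)).card < m := by
      have hBsub : A.filter (fun x => ρ x = ρ a)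
          ⊆ Finset.univ.filter (fun x => ρ x = ρ a) :=
        Finset.filter_subset_filter _ (Finset.subset_univ A)
      have hmemU : a + t ∈ Finset.univ.filter (fun x => ρ x = ρ a) :=
        Finset.mem_filter.mpr ⟨Finset.mem_univ _, hρt a⟩
      have hssub : A.filter (fun x => ρ x = ρ a)
          ⊂ Finset.univ.filter (fun x => ρ x = ρ a) := by
        refine Finset.ssubset_iff_of_subset hBsub |>.mpr ⟨a + t, hmemU, ?_⟩
        intro hmem
        exact hat (Finset.mem_filter.mp hmem).1
      have hcardU : (Finset.univ.filter (fun x : ZMod c => ρ x = ρ a)).card = m := by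
        have h := card_residue c n (ρ a) hndvd (hρlt a)
        rw [hcn] at h
        exact h
      have := Finset.card_lt_card hssub
      omega
    have := Nat.le_of_dvd hx0pos hdvdx
    omega
end
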